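/- arXiv:2209.01617 — 5 statements merged into one kernel-verified Lean document; each statement's English description precedes it below -/
import Mathlib

section
/- If D is an ultrafilter on an index set I and the ultraproduct of a family of finite sets (n_i)_{i∈I} with respect to D is infinite with cardinality λ, then λ^{ℵ₀} = λ. -/
/-!
Replacing each `n i` by `Fin (k i)` with `k i = |n i|`, everything is about the cardinality
`|k|` of the ultraproduct of the `Fin (k i)`, and `k` is unbounded along `D` because `λ` is
infinite. The iterated square roots `h_m = sqrt^[m+1] ∘ k` satisfy `k ≤ (2 h_m)^(4^(m+1))`,
so `λ ≤ c · |h_m|^e` for finite `c, e`, which forces `|h_m| = λ`. On the other hand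
`∏_{m < k i} h_m i ≤ k i`, and as `m < k i` for `D`-almost all `i`, the ultraproduct of these
products maps onto `∏_m (ultraproduct of the Fin (h_m i))`, of cardinality `λ ^ ℵ₀`.
Thus `λ ^ ℵ₀ ≤ λ`.
-/

open Cardinal Filter

universe u v w

namespace Nat

theorem sqrt_iterate_pos {x : ℕ} (hx : 0 < x) (m : ℕ) : 0 < sqrt^[m] x := by
  induction m with
  | zero => exact hx
  | succ m ih => rw [Function.iterate_succ_apply']; exact sqrt_pos.mpr ih

theorem sqrt_iterate_le_self (x m : ℕ) : sqrt^[m] x ≤ x := by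
  induction m with
  | zero => rfl
  | succ m ih => rw [Function.iterate_succ_apply']; exact (sqrt_le_self _).trans ih

theorem two_mul_le_two_mul_sqrt_pow_four (y : ℕ) : 2 * y ≤ (2 * sqrt y) ^ 4 := by
  rcases eq_zero_or_pos y with rfl | hy
  · simp
  have hs : 1 ≤ sqrt y := sqrt_pos.mpr hy
  calc 2 * y ≤ 2 * (sqrt y + 1) ^ 2 := Nat.mul_le_mul_left _ (lt_succ_sqrt' y).le
    _ ≤ 2 * (2 * sqrt y) ^ 2 := Nat.mul_le_mul_left _ (Nat.pow_le_pow_left (by omega) 2)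
    _ ≤ (2 * sqrt y) ^ 2 * (2 * sqrt y) ^ 2 := by gcongr; nlinarith
    _ = (2 * sqrt y) ^ 4 := by ring

theorem le_two_mul_sqrt_iterate_pow (x m : ℕ) : x ≤ (2 * sqrt^[m] x) ^ 4 ^ m := by
  induction m with
  | zero => simp; omega
  | succ m ih =>
    calc x ≤ (2 * sqrt^[m] x) ^ 4 ^ m := ih
      _ ≤ ((2 * sqrt^[m + 1] x) ^ 4) ^ 4 ^ m := by
        rw [Function.iterate_succ_apply']
        exact Nat.pow_le_pow_left (two_mul_le_two_mul_sqrt_pow_four _) _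
      _ = (2 * sqrt^[m + 1] x) ^ 4 ^ (m + 1) := by rw [← pow_mul, pow_succ', Nat.mul_comm]

theorem sqrt_iterate_mul_prod_le (x M : ℕ) :
    sqrt^[M] x * ∏ m ∈ Finset.range M, sqrt^[m + 1] x ≤ x := by
  induction M with
  | zero => simp
  | succ M ih =>
    calc sqrt^[M + 1] x * ∏ m ∈ Finset.range (M + 1), sqrt^[m + 1] x
        = sqrt^[M + 1] x ^ 2 * ∏ m ∈ Finset.range M, sqrt^[m + 1] x := by
          rw [Finset.prod_range_succ]; ring
      _ ≤ sqrt^[M] x * ∏ m ∈ Finset.range M, sqrt^[m + 1] x := by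
          rw [Function.iterate_succ_apply']
          exact Nat.mul_le_mul_right _ (sqrt_le' _)
      _ ≤ x := ih

theorem prod_sqrt_iterate_le {x : ℕ} (hx : 0 < x) (M : ℕ) :
    ∏ m : Fin M, sqrt^[m + 1] x ≤ x := by
  rw [Fin.prod_univ_eq_prod_range (fun m => sqrt^[m + 1] x)]
  exact (Nat.le_mul_of_pos_left _ (sqrt_iterate_pos hx M)).trans (sqrt_iterate_mul_prod_le x M)

end Nat

section

variable {I : Type u} (D : Ultrafilter I)

def ultraproductSetoid (α : I → Type v) : Setoid (∀ i, α i) where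
  r f g := ∀ᶠ i in D, f i = g i
  iseqv :=
    { refl := fun _ => .of_forall fun _ => rfl
      symm := fun h => h.mono fun _ => Eq.symm
      trans := fun h₁ h₂ => (h₁.and h₂).mono fun _ h => h.1.trans h.2 }

abbrev Ultraproduct (α : I → Type v) : Type (max u v) := Quotient (ultraproductSetoid D α)

namespace Ultraproduct

variable {D} {α : I → Type v} {β : I → Type w}

theorem mk_eq_mk_iff {f g : ∀ i, α i} :
    (⟦f⟧ : Ultraproduct D α) = ⟦g⟧ ↔ ∀ᶠ i in D, f i = g i :=
  Quotient.eq

theorem nonempty_factor (x : Ultraproduct D α) (i : I) : Nonempty (α i) :=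
  Quotient.inductionOn x fun f => ⟨f i⟩

def map (F : ∀ i, α i → β i) : Ultraproduct D α → Ultraproduct D β :=
  Quotient.map (fun f i => F i (f i)) fun _ _ h => h.mono fun i hi => congrArg (F i) hi

theorem map_injective {F : ∀ i, α i → β i} (hF : ∀ᶠ i in D, Function.Injective (F i)) :
    Function.Injective (map F : Ultraproduct D α → Ultraproduct D β) := by
  rintro ⟨f⟩ ⟨g⟩ h
  exact Quotient.sound <| ((mk_eq_mk_iff.mp h).and hF).mono fun i hi => hi.2 hi.1

def congr (e : ∀ i, α i ≃ β i) : Ultraproduct D α ≃ Ultraproduct D β :=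
  Quotient.congr (Equiv.piCongrRight e) fun f g => by
    change (∀ᶠ i in D, f i = g i) ↔ ∀ᶠ i in D, e i (f i) = e i (g i)
    simp only [(e _).apply_eq_iff_eq]

def toProd : Ultraproduct D (fun i => α i × β i) → Ultraproduct D α × Ultraproduct D β :=
  fun x => (map (fun _ => Prod.fst) x, map (fun _ => Prod.snd) x)

theorem toProd_injective :
    Function.Injective (toProd : Ultraproduct D (fun i => α i × β i) → _) := by
  rintro ⟨f⟩ ⟨g⟩ h
  obtain ⟨h₁, h₂⟩ := Prod.ext_iff.mp h
  exact Quotient.sound <| ((mk_eq_mk_iff.mp h₁).and (mk_eq_mk_iff.mp h₂)).mono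
    fun i hi => Prod.ext hi.1 hi.2

theorem mk_prod_le {β : I → Type v} : #(Ultraproduct D fun i => α i × β i) ≤
    #(Ultraproduct D α) * #(Ultraproduct D β) := by
  simpa using mk_le_of_injective (toProd_injective (D := D) (α := α) (β := β))

theorem mk_pi_le_mk_pi_fin (β : ℕ → I → Type v) [∀ m i, Nonempty (β m i)] {k : I → ℕ}
    (hk : ∀ m, ∀ᶠ i in D, m < k i) :
    #(∀ m, Ultraproduct D (β m)) ≤ #(Ultraproduct D fun i => ∀ j : Fin (k i), β j i) := by
  classical
  let restrict (m : ℕ) :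
      Ultraproduct D (fun i => ∀ j : Fin (k i), β j i) → Ultraproduct D (β m) :=
    map fun i f => if hm : m < k i then f ⟨m, hm⟩ else Classical.arbitrary _
  refine mk_le_of_surjective (f := fun x m => restrict m x) fun c => ?_
  refine ⟨⟦fun i j => (c j).out i⟧, funext fun m => ?_⟩
  conv_rhs => rw [← Quotient.out_eq (c m)]
  exact Quotient.sound <| (hk m).mono fun i hi => by simp [hi]

end Ultraproduct

noncomputable def ultraCard (k : I → ℕ) : Cardinal.{u} :=
  #(Ultraproduct D fun i => Fin (k i))

variable {a b k : I → ℕ}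

theorem ultraCard_le_of_eventually_le (hb : ∀ i, 0 < b i) (hab : ∀ᶠ i in D, a i ≤ b i) :
    ultraCard D a ≤ ultraCard D b := by
  classical
  refine mk_le_of_injective (Ultraproduct.map_injective
    (F := fun i x => if h : a i ≤ b i then Fin.castLE h x else ⟨0, hb i⟩) ?_)
  exact hab.mono fun i hi => by simpa only [dif_pos hi] using Fin.castLE_injective hi

theorem ultraCard_const_le (c : ℕ) : ultraCard D (fun _ => c) ≤ c := by
  have hsurj : Function.Surjective fun v : ULift.{u} (Fin c) =>
      (⟦fun _ => v.down⟧ : Ultraproduct D fun _ => Fin c) := by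
    rintro ⟨f⟩
    obtain ⟨v, hv⟩ := (D.map f).eq_pure_of_finite
    have : ∀ᶠ i in D, f i = v :=
      Ultrafilter.mem_map.mp (hv ▸ Ultrafilter.mem_pure.mpr (Set.mem_singleton v))
    exact ⟨⟨v⟩, Quotient.sound <| this.mono fun _ h => h.symm⟩
  simpa [ultraCard] using mk_le_of_surjective hsurj

theorem ultraCard_mul_le :
    ultraCard D (fun i => a i * b i) ≤ ultraCard D a * ultraCard D b :=
  calc ultraCard D (fun i => a i * b i) = #(Ultraproduct D fun i => Fin (a i) × Fin (b i)) :=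
        mk_congr (Ultraproduct.congr fun _ => finProdFinEquiv.symm)
    _ ≤ ultraCard D a * ultraCard D b := Ultraproduct.mk_prod_le

theorem ultraCard_pow_le (e : ℕ) :
    ultraCard D (fun i => a i ^ e) ≤ ultraCard D a ^ e := by
  induction e with
  | zero => simpa using ultraCard_const_le D 1
  | succ e ih =>
    simp only [pow_succ]
    exact (ultraCard_mul_le D).trans (mul_le_mul_left ih _)

theorem pos_of_aleph0_le_ultraCard (hk : ℵ₀ ≤ ultraCard D k) (i : I) : 0 < k i := by
  obtain ⟨x⟩ : Nonempty (Ultraproduct D fun i => Fin (k i)) :=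
    mk_ne_zero_iff.mp (aleph0_pos.trans_le hk).ne'
  exact Fin.pos_iff_nonempty.mpr (x.nonempty_factor i)

theorem eventually_lt_of_aleph0_le_ultraCard (hk : ℵ₀ ≤ ultraCard D k) (r : ℕ) :
    ∀ᶠ i in D, r < k i := by
  by_contra h
  have hle : ∀ᶠ i in D, k i ≤ r + 1 :=
    (Ultrafilter.eventually_not.mpr h).mono fun i hi => by omega
  have := hk.trans ((ultraCard_le_of_eventually_le D (fun _ => r.succ_pos) hle).trans
    (ultraCard_const_le D _))
  exact natCast_lt_aleph0.not_ge this

theorem ultraCard_eq_of_le_mul_pow {c e : ℕ} (hc : 0 < c) (hk : ℵ₀ ≤ ultraCard D k)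
    (ha : ∀ i, 0 < a i) (hak : ∀ i, a i ≤ k i) (hka : ∀ᶠ i in D, k i ≤ c * a i ^ e) :
    ultraCard D a = ultraCard D k := by
  have upper : ultraCard D k ≤ c * ultraCard D a ^ e :=
    calc ultraCard D k ≤ ultraCard D fun i => c * a i ^ e :=
          ultraCard_le_of_eventually_le D (fun i => by have := ha i; positivity) hka
      _ ≤ ultraCard D (fun _ => c) * ultraCard D fun i => a i ^ e := ultraCard_mul_le D
      _ ≤ c * ultraCard D a ^ e := mul_le_mul' (ultraCard_const_le D c) (ultraCard_pow_le D e)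
  have ha_inf : ℵ₀ ≤ ultraCard D a := by
    by_contra! h
    exact (hk.trans upper).not_gt
      (mul_lt_aleph0 natCast_lt_aleph0 (power_lt_aleph0 h natCast_lt_aleph0))
  refine le_antisymm
    (ultraCard_le_of_eventually_le D (pos_of_aleph0_le_ultraCard D hk) (.of_forall hak)) ?_
  calc ultraCard D k ≤ c * ultraCard D a ^ e := upper
    _ ≤ c * ultraCard D a := mul_le_mul_right (power_nat_le ha_inf) _
    _ ≤ ultraCard D a := mul_le_of_le ha_inf (natCast_lt_aleph0.le.trans ha_inf) le_rfl

theorem ultraCard_pow_aleph0_le (hk : ℵ₀ ≤ ultraCard D k) :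
    ultraCard D k ^ ℵ₀ ≤ ultraCard D k := by
  have hpos := pos_of_aleph0_le_ultraCard D hk
  have hfactor (m : ℕ) : ultraCard D (fun i => Nat.sqrt^[m + 1] (k i)) = ultraCard D k :=
    ultraCard_eq_of_le_mul_pow D (c := 2 ^ 4 ^ (m + 1)) (by positivity) hk
      (fun i => Nat.sqrt_iterate_pos (hpos i) _) (fun i => Nat.sqrt_iterate_le_self _ _)
      (.of_forall fun i => mul_pow 2 _ _ ▸ Nat.le_two_mul_sqrt_iterate_pow _ _)
  have (m : ℕ) (i : I) : Nonempty (Fin (Nat.sqrt^[m + 1] (k i))) :=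
    Fin.pos_iff_nonempty.mp (Nat.sqrt_iterate_pos (hpos i) _)
  calc ultraCard D k ^ ℵ₀
      = #(∀ m : ℕ, Ultraproduct D fun i => Fin (Nat.sqrt^[m + 1] (k i))) := by
        rw [mk_pi]
        change _ = prod fun m => ultraCard D fun i => Nat.sqrt^[m + 1] (k i)
        simp only [hfactor, prod_const, lift_uzero, mk_nat, lift_aleph0]
    _ ≤ #(Ultraproduct D fun i => ∀ j : Fin (k i), Fin (Nat.sqrt^[j + 1] (k i))) :=
        Ultraproduct.mk_pi_le_mk_pi_fin (fun m i => Fin (Nat.sqrt^[m + 1] (k i)))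
          (eventually_lt_of_aleph0_le_ultraCard D hk)
    _ = ultraCard D fun i => ∏ j : Fin (k i), Nat.sqrt^[j + 1] (k i) :=
        mk_congr (Ultraproduct.congr fun _ => finPiFinEquiv)
    _ ≤ ultraCard D k :=
        ultraCard_le_of_eventually_le D hpos
          (.of_forall fun i => Nat.prod_sqrt_iterate_le (hpos i) _)

end

/-- If `D` is an ultrafilter on `I` and the ultraproduct of a family of finite sets
`n i` with respect to `D` has infinite cardinality `lam`, then `lam ^ ℵ₀ = lam`. -/
theorem stmt_0 {I : Type u} (D : Ultrafilter I) (n : I → Type u) [∀ i, Finite (n i)]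
    (lam : Cardinal.{u})
    (hlam : lam = #(Quot (fun f g : (∀ i, n i) => {i | f i = g i} ∈ D)))
    (hinf : ℵ₀ ≤ lam) : lam ^ ℵ₀ = lam := by
  have hlam_fin : lam = ultraCard D fun i => Nat.card (n i) :=
    hlam.trans (mk_congr (Ultraproduct.congr (D := D) (α := n) fun i => Finite.equivFin (n i)))
  rw [hlam_fin] at hinf ⊢
  exact le_antisymm (ultraCard_pow_aleph0_le D hinf) (self_le_power _ one_le_aleph0)
end

section
/- For a strongly inaccessible cardinal μ, the following are equivalent: (1) every μ-tree has a branch of length μ (i.e., μ has the tree property); (2) for every family of functions f_α : α → α (α < μ) there is a function f : μ → μ such that for every α < μ there exists β with α ≤ β < μ and f_β ↾ α = f ↾ α. -/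
/-!
(2 ⇒ 1) Code the nodes of each level of a `μ`-tree injectively by ordinals below some bound
`< μ`, and let `f_β` read off the codes of the predecessors of a fixed node of height `β`.
If `f` is guessed by the `f_β`, the nodes whose code is the value of `f` at their height meet
every level, and any two of them lie below a common node, so they form a branch.

(1 ⇒ 2) For `μ` sets `S_i ⊆ μ`, the partial types `(a, p)` with `p ⊆ a` such that
`{x | ∀ i < a, x ∈ S_i ↔ i ∈ p}` is unbounded form a `μ`-tree (as `μ` is a regular strong
limit), and a branch yields a uniform `μ`-complete filter `U` deciding every `S_i`.
Apply this to the sets `{x | d < t x}` for the terms `t x = f_{f_{⋯ f_x(c_n) ⋯}(c_2)}(c_1)`.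
As `U` is countably complete, comparison of terms `U`-almost everywhere is well-founded;
let `e` be a least term that is almost everywhere above every constant. For each `c`, the
term `f_{e x}(c)` lies below `e x` almost everywhere, hence is bounded, hence almost
everywhere equal to a constant `G c`. For `α < μ`, almost every `x` has `α < e x` and
`f_{e x} ↾ α = G ↾ α`, so `β = e x` works.
-/

open Cardinal

/-- `μ` has the tree property: every `μ`-tree (a tree of height `μ`, all of whose
levels have cardinality `< μ`, with each point's predecessors linearly ordered and
hitting every lower level) has a branch of length `μ`. -/
def TreeProp (μ : Cardinal) : Prop :=
  ∀ (T : Type) (lt : T → T → Prop) (ht : T → Ordinal),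
    (∀ s t u, lt s t → lt t u → lt s u) →
    (∀ t, ¬ lt t t) →
    (∀ s t, lt s t → ht s < ht t) →
    (∀ t, ∀ β < ht t, ∃ s, lt s t ∧ ht s = β) →
    (∀ s t u, lt s u → lt t u → (lt s t ∨ s = t ∨ lt t s)) →
    (∀ t, ht t < μ.ord) →
    (∀ α < μ.ord, ∃ t, ht t = α) →
    (∀ α : Ordinal, #{t | ht t = α} < μ) →
    ∃ B : Set T, (∀ s ∈ B, ∀ t ∈ B, lt s t ∨ s = t ∨ lt t s) ∧
      ∀ α < μ.ord, ∃ t ∈ B, ht t = α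

/-- For every family of functions `f_α : α → α` (for `α < μ`, coded as `f α`)
there is `f : μ → μ` such that for every `α < μ` some `β` with `α ≤ β < μ`
satisfies `f_β ↾ α = f ↾ α`. -/
def FuncProp (μ : Cardinal) : Prop :=
  ∀ f : Ordinal → Ordinal → Ordinal,
    (∀ α < μ.ord, ∀ β < α, f α β < α) →
    ∃ g : Ordinal → Ordinal, (∀ β < μ.ord, g β < μ.ord) ∧
      ∀ α < μ.ord, ∃ β, α ≤ β ∧ β < μ.ord ∧ ∀ γ < α, f β γ = g γ

open Set Filter Ordinal

universe u

theorem mk_Iio_ord_toType_lt {μ : Cardinal} (a : μ.ord.ToType) : #(Iio a) < μ := by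
  simpa using mk_Iio_lt a (by simp)

theorem Antitone.neBot_iInf_principal {X : Type u} [Preorder X] [Nonempty X]
    [IsDirectedOrder X] {R : X → Set X} (hR : Antitone R) (hne : ∀ a, (R a).Nonempty) :
    (⨅ a, 𝓟 (R a)).NeBot :=
  (HasAntitoneBasis.iInf_principal hR).1.neBot_iff.2 fun _ => hne _

theorem Antitone.cardinalInterFilter_iInf_principal {X : Type u} [LinearOrder X] [Nonempty X]
    {R : X → Set X} (hR : Antitone R) : CardinalInterFilter (⨅ a, 𝓟 (R a)) (Order.cof X) := by
  have hbasis := HasAntitoneBasis.iInf_principal hR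
  refine ⟨fun S hS hmem => ?_⟩
  choose a ha using fun s (hs : s ∈ S) => hbasis.mem_iff.1 (hmem s hs)
  have hsmall : #(range fun s : S => a s.1 s.2) < Order.cof X := mk_range_le.trans_lt hS
  obtain ⟨b, hb⟩ := not_isCofinal_iff.1 fun h => (Order.cof_le h).not_gt hsmall
  refine hbasis.mem_iff.2 ⟨b, subset_sInter fun s hs => ?_⟩
  exact (hR (hb _ ⟨⟨s, hs⟩, rfl⟩).le).trans (ha s hs)

theorem Filter.wellFounded_eventually_lt {α ι β : Type*} [Preorder β] [WellFoundedLT β]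
    (l : Filter α) [l.NeBot] [CountableInterFilter l] (φ : ι → α → β) :
    WellFounded fun i j => ∀ᶠ x in l, φ i x < φ j x := by
  refine wellFounded_iff_isEmpty_descending_chain.2 ⟨fun ⟨s, hs⟩ => ?_⟩
  obtain ⟨x, hx⟩ := (eventually_countable_forall.2 hs).exists
  exact (RelEmbedding.natGT (fun n => φ (s n) x) hx).not_wellFounded wellFounded_lt

theorem Filter.exists_eventually_eq_of_eventually_le {α X : Type u} [LinearOrder X]
    [WellFoundedLT X] {κ : Cardinal.{u}} (hX : ∀ a : X, #(Iio a) < κ) {l : Filter α}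
    [CardinalInterFilter l κ] {φ : α → X}
    (hdec : ∀ d, (∀ᶠ x in l, d < φ x) ∨ ∀ᶠ x in l, φ x ≤ d)
    (hbdd : ∃ d, ∀ᶠ x in l, φ x ≤ d) : ∃ v, ∀ᶠ x in l, φ x = v := by
  obtain ⟨v, hv, hmin⟩ := wellFounded_lt.has_min {d | ∀ᶠ x in l, φ x ≤ d} hbdd
  have hbelow : ∀ d < v, ∀ᶠ x in l, d < φ x := fun d hd =>
    (hdec d).resolve_right fun h => hmin d h hd
  refine ⟨v, ?_⟩
  filter_upwards [hv, (eventually_cardinal_ball (hX v)).2 hbelow] with x hle hgt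
  exact hle.antisymm (le_of_forall_lt hgt)

def GuessingProperty (X : Type*) [LinearOrder X] : Prop :=
  ∀ F : X → X → X, (∀ a b, b < a → F a b < a) →
    ∃ G : X → X, ∀ a, ∃ b, a ≤ b ∧ ∀ c < a, F b c = G c

def iterEval {X : Type*} (F : X → X → X) (l : List X) (x : X) : X :=
  l.foldr (fun c v => F v c) x

theorem exists_guess_of_filter {X : Type u} [LinearOrder X] [WellFoundedLT X] [NoMaxOrder X]
    {κ : Cardinal.{u}} (hκ : ℵ₀ < κ) (hX : ∀ a : X, #(Iio a) < κ) {F : X → X → X}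
    (hF : ∀ a b, b < a → F a b < a) {U : Filter X} [U.NeBot] [CardinalInterFilter U κ]
    (hU : U ≤ atTop)
    (hdec : ∀ d l, (∀ᶠ x in U, d < iterEval F l x) ∨ ∀ᶠ x in U, iterEval F l x ≤ d) :
    ∃ G : X → X, ∀ a, ∃ b, a ≤ b ∧ ∀ c < a, F b c = G c := by
  have := CardinalInterFilter.toCountableInterFilter U hκ
  obtain ⟨e, he, hmin⟩ := (U.wellFounded_eventually_lt (iterEval F)).has_min
    {l | ∀ d, ∀ᶠ x in U, d < iterEval F l x} ⟨[], fun d => hU (eventually_gt_atTop d)⟩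
  have hbdd : ∀ c, ∃ d, ∀ᶠ x in U, iterEval F (c :: e) x ≤ d := by
    intro c
    by_contra h
    refine hmin (c :: e) (fun d => (hdec d _).resolve_right (not_exists.1 h d)) ?_
    filter_upwards [he c] with x hx using hF _ _ hx
  choose G hG using fun c => exists_eventually_eq_of_eventually_le hX (hdec · _) (hbdd c)
  refine ⟨G, fun a => ?_⟩
  obtain ⟨x, hax, hx⟩ :=
    ((he a).and ((eventually_cardinal_ball (hX a)).2 fun c _ => hG c)).exists
  exact ⟨_, hax.le, hx⟩

theorem funcProp_of_guessingProperty {μ : Cardinal} (h : GuessingProperty μ.ord.ToType) :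
    FuncProp μ := by
  intro f hf
  let e : Iio μ.ord ≃o μ.ord.ToType := ToType.mk
  -- the `min` only matters off the domain `b < a`, where nothing bounds `f`
  let F : μ.ord.ToType → μ.ord.ToType → μ.ord.ToType := fun a b =>
    e ⟨min (f (e.symm a) (e.symm b)) (e.symm a), mem_Iio.2 (min_lt_of_right_lt (e.symm a).2)⟩
  have hF : ∀ a b, b < a → F a b < a := fun a b hba => by
    refine e.symm.lt_iff_lt.1 ?_
    simp only [F, OrderIso.symm_apply_apply, ← Subtype.coe_lt_coe]
    exact min_lt_of_left_lt (hf _ (e.symm a).2 _ (e.symm.lt_iff_lt.2 hba))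
  obtain ⟨G, hG⟩ := h F hF
  refine ⟨fun β => if hβ : β < μ.ord then e.symm (G (e ⟨β, mem_Iio.2 hβ⟩)) else 0,
    fun β hβ => by dsimp only; rw [dif_pos hβ]; exact (e.symm _).2, fun α hα => ?_⟩
  obtain ⟨b, hab, hb⟩ := hG (e ⟨α, hα⟩)
  have hαb : α ≤ e.symm b := e.le_symm_apply.2 hab
  refine ⟨e.symm b, hαb, (e.symm b).2, fun γ hγ => ?_⟩
  have hγμ := hγ.trans hα
  have hFb := congrArg (fun x => ((e.symm x : Iio μ.ord) : Ordinal))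
    (hb (e ⟨γ, hγμ⟩) (e.lt_iff_lt.2 hγ))
  simp only [F, OrderIso.symm_apply_apply] at hFb
  dsimp only
  rw [dif_pos hγμ, ← hFb, min_eq_left (hf _ (e.symm b).2 _ (hγ.trans_le hαb)).le]

def realizers {X Y : Type*} [LT X] (S : X → Set Y) (a : X) (p : Set X) : Set Y :=
  {y | ∀ i < a, (y ∈ S i ↔ i ∈ p)}

theorem realizers_subset_realizers_inter_Iio {X Y : Type*} [Preorder X] (S : X → Set Y)
    {a b : X} (hab : a ≤ b) (p : Set X) : realizers S b p ⊆ realizers S a (p ∩ Iio a) :=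
  fun _ hy i hi => (hy i (hi.trans_le hab)).trans (and_iff_left hi).symm

theorem iUnion_realizers_eq_univ {X Y : Type*} [Preorder X] (S : X → Set Y) (a : X) :
    ⋃ p : Set (Iio a), realizers S a ((↑) '' p) = Set.univ := by
  refine eq_univ_of_forall fun y => mem_iUnion.2 ⟨{i | y ∈ S i.1}, fun i hi => ?_⟩
  simp [hi]

noncomputable section

variable {μ : Cardinal.{0}} (S : μ.ord.ToType → Set μ.ord.ToType)

@[ext]
structure PartialType where
  level : μ.ord.ToType
  pattern : Set μ.ord.ToType
  pattern_subset : pattern ⊆ Iio level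
  isCofinal_realizers : IsCofinal (realizers S level pattern)

namespace PartialType

variable {S}

def height (t : PartialType S) : Ordinal := ToType.mk.symm t.level

def Lt (s t : PartialType S) : Prop :=
  s.level < t.level ∧ s.pattern = t.pattern ∩ Iio s.level

def restrict (t : PartialType S) (a : μ.ord.ToType) (ha : a ≤ t.level) : PartialType S where
  level := a
  pattern := t.pattern ∩ Iio a
  pattern_subset := inter_subset_right
  isCofinal_realizers :=
    t.isCofinal_realizers.mono (realizers_subset_realizers_inter_Iio S ha _)

theorem height_lt_height {s t : PartialType S} : s.height < t.height ↔ s.level < t.level := by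
  simp [height]

theorem height_lt (t : PartialType S) : t.height < μ.ord := (ToType.mk.symm t.level).2

theorem height_eq_iff {t : PartialType S} {α : Ordinal} (hα : α < μ.ord) :
    t.height = α ↔ t.level = ToType.mk ⟨α, hα⟩ :=
  (Subtype.ext_iff (a2 := ⟨α, hα⟩)).symm.trans ToType.mk.symm_apply_eq

theorem Lt.of_level_lt {s t u : PartialType S} (hs : s.Lt u) (ht : t.Lt u)
    (h : s.level < t.level) : s.Lt t :=
  ⟨h, by rw [hs.2, ht.2, inter_assoc, Iio_inter_Iio, min_eq_right h.le]⟩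

theorem Lt.trans {s t u : PartialType S} (hst : s.Lt t) (htu : t.Lt u) : s.Lt u :=
  ⟨hst.1.trans htu.1, by rw [hst.2, htu.2, inter_assoc, Iio_inter_Iio, min_eq_right hst.1.le]⟩

theorem Lt.irrefl (t : PartialType S) : ¬ t.Lt t := fun h => h.1.false

theorem lt_trichotomy_of_lt {s t u : PartialType S} (hs : s.Lt u) (ht : t.Lt u) :
    s.Lt t ∨ s = t ∨ t.Lt s := by
  rcases lt_trichotomy s.level t.level with h | h | h
  · exact Or.inl (hs.of_level_lt ht h)
  · exact Or.inr (Or.inl (PartialType.ext h (by rw [hs.2, ht.2, h])))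
  · exact Or.inr (Or.inr (ht.of_level_lt hs h))

theorem exists_lt_height_eq (t : PartialType S) {β : Ordinal} (hβ : β < t.height) :
    ∃ s : PartialType S, s.Lt t ∧ s.height = β := by
  have hβμ := hβ.trans t.height_lt
  have ha : ToType.mk ⟨β, hβμ⟩ < t.level := ToType.mk.lt_symm_apply.1 hβ
  exact ⟨t.restrict _ ha.le, ⟨ha, rfl⟩, (height_eq_iff hβμ).2 rfl⟩

variable (S)

theorem exists_level_eq (hμ : μ.IsRegular) (hμ' : μ.IsStrongLimit) (a : μ.ord.ToType) :
    ∃ t : PartialType S, t.level = a := by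
  obtain ⟨p, hp⟩ := isCofinal_of_isCofinal_iUnion
    (s := fun p : Set (Iio a) => realizers S a ((↑) '' p))
    (by rw [iUnion_realizers_eq_univ]; exact IsCofinal.univ)
    (by
      rw [cof_toType, hμ.cof_ord, mk_set]
      exact hμ'.isStrongPrelimit (mk_Iio_ord_toType_lt a))
  exact ⟨⟨a, _, by rintro _ ⟨i, -, rfl⟩; exact i.2, hp⟩, rfl⟩

theorem mk_setOf_level_eq_lt (hμ' : μ.IsStrongLimit) (a : μ.ord.ToType) :
    #{t : PartialType S | t.level = a} < μ := by
  have hpattern : ∀ t : {t : PartialType S | t.level = a},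
      t.1.pattern = (↑) '' ((↑) ⁻¹' t.1.pattern : Set (Iio a)) := fun t => by
    have hsub := t.1.pattern_subset
    rw [t.2] at hsub
    rw [Subtype.image_preimage_coe, inter_eq_right.2 hsub]
  refine (mk_le_of_injective (f := fun t => ((↑) ⁻¹' t.1.pattern : Set (Iio a)))
    fun t t' h => Subtype.ext (PartialType.ext (t.2.trans t'.2.symm) ?_)).trans_lt ?_
  · rw [hpattern t, hpattern t']
    exact congrArg _ h
  · rw [mk_set]
    exact hμ'.isStrongPrelimit (mk_Iio_ord_toType_lt a)

theorem mk_setOf_height_eq_lt (hμ' : μ.IsStrongLimit) (α : Ordinal) :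
    #{t : PartialType S | t.height = α} < μ := by
  by_cases hα : α < μ.ord
  · simpa only [height_eq_iff hα] using mk_setOf_level_eq_lt S hμ' _
  · have : {t : PartialType S | t.height = α} = ∅ :=
      eq_empty_of_forall_notMem fun t ht => hα (ht ▸ t.height_lt)
    rw [this, mk_eq_zero]
    exact pos_iff_ne_zero.2 hμ'.ne_zero

end PartialType

theorem TreeProp.exists_coherent_partialTypes (htp : TreeProp μ) (hμ : μ.IsRegular)
    (hμ' : μ.IsStrongLimit) :
    ∃ N : μ.ord.ToType → PartialType S,
      (∀ a, (N a).level = a) ∧ ∀ a b, a ≤ b → (N a).pattern = (N b).pattern ∩ Iio a := by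
  obtain ⟨B, hchain, hlevels⟩ := htp (PartialType S) PartialType.Lt PartialType.height
    (fun _ _ _ => PartialType.Lt.trans) PartialType.Lt.irrefl
    (fun _ _ h => PartialType.height_lt_height.2 h.1) (fun t _ => t.exists_lt_height_eq)
    (fun _ _ _ => PartialType.lt_trichotomy_of_lt) PartialType.height_lt
    (fun α hα => by
      simpa only [PartialType.height_eq_iff hα] using PartialType.exists_level_eq S hμ hμ' _)
    (PartialType.mk_setOf_height_eq_lt S hμ')
  have hB : ∀ a, ∃ t ∈ B, t.level = a := fun a => by
    obtain ⟨t, htB, ht⟩ := hlevels (ToType.mk.symm a) (ToType.mk.symm a).2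
    exact ⟨t, htB, by rw [(PartialType.height_eq_iff (ToType.mk.symm a).2).1 ht]; simp⟩
  choose N hNB hN using hB
  refine ⟨N, hN, fun a b hab => ?_⟩
  rcases hchain _ (hNB a) _ (hNB b) with h | h | h
  · rw [h.2, hN]
  · have hpat := (N a).pattern_subset
    rw [hN] at hpat
    rw [← h, inter_eq_left.2 hpat]
  · exact absurd hab (not_le.2 (by simpa only [hN] using h.1))

theorem TreeProp.exists_filter_deciding (htp : TreeProp μ) (hμ : μ.IsRegular)
    (hμ' : μ.IsStrongLimit) :
    ∃ U : Filter μ.ord.ToType, U.NeBot ∧ U ≤ atTop ∧ CardinalInterFilter U μ ∧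
      ∀ i, (∀ᶠ x in U, x ∈ S i) ∨ ∀ᶠ x in U, x ∉ S i := by
  have := Cardinal.noMaxOrder hμ.aleph0_le
  have := Cardinal.nonempty_ord_toType hμ.pos.ne'
  obtain ⟨N, hN, hcoh⟩ := htp.exists_coherent_partialTypes S hμ hμ'
  set R := fun a => realizers S a (N a).pattern ∩ Ici a
  have hR : Antitone R := fun a b hab => inter_subset_inter
    (by rw [hcoh a b hab]; exact realizers_subset_realizers_inter_Iio S hab _)
    (Ici_subset_Ici.2 hab)
  have hne : ∀ a, (R a).Nonempty := fun a => by
    have hcof := (N a).isCofinal_realizers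
    rw [hN] at hcof
    obtain ⟨y, hy, hay⟩ := hcof a
    exact ⟨y, hy, hay⟩
  have hinter := hR.cardinalInterFilter_iInf_principal
  rw [cof_toType, hμ.cof_ord] at hinter
  refine ⟨⨅ a, 𝓟 (R a), hR.neBot_iInf_principal hne,
    iInf_mono fun a => principal_mono.2 inter_subset_right, hinter, fun i => ?_⟩
  obtain ⟨b, hb⟩ := exists_gt i
  have hRb : R b ∈ ⨅ a, 𝓟 (R a) := mem_iInf_of_mem b (mem_principal_self _)
  by_cases hi : i ∈ (N b).pattern
  · exact Or.inl (mem_of_superset hRb fun x hx => (hx.1 i hb).2 hi)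
  · exact Or.inr (mem_of_superset hRb fun x hx h => hi ((hx.1 i hb).1 h))

end

theorem funcProp_of_treeProp {μ : Cardinal} (h1 : ℵ₀ < μ) (h2 : μ.IsRegular)
    (h3 : μ.IsStrongLimit) (htp : TreeProp μ) : FuncProp μ := by
  refine funcProp_of_guessingProperty fun F hF => ?_
  have := Cardinal.noMaxOrder h2.aleph0_le
  have hinf : Infinite μ.ord.ToType := by
    rw [Cardinal.infinite_iff, mk_toType, Cardinal.card_ord]
    exact h2.aleph0_le
  obtain ⟨e⟩ : Nonempty (μ.ord.ToType ≃ μ.ord.ToType × List μ.ord.ToType) := by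
    rw [← Cardinal.eq, Cardinal.mk_prod, Cardinal.lift_id, Cardinal.lift_id,
      Cardinal.mk_list_eq_mk, Cardinal.mul_eq_self (Cardinal.infinite_iff.1 hinf)]
  obtain ⟨U, _, htop, _, hdec⟩ :=
    htp.exists_filter_deciding (fun i => {x | (e i).1 < iterEval F (e i).2 x}) h2 h3
  exact exists_guess_of_filter h1 mk_Iio_ord_toType_lt hF htop fun d l => by
    simpa [not_lt] using hdec (e.symm (d, l))

theorem exists_levelwise_injective_code {T : Type} (ht : T → Ordinal) :
    ∃ c : T → Ordinal, (∀ t, c t < (#{s | ht s = ht t}).ord) ∧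
      ∀ s t, ht s = ht t → c s = c t → s = t := by
  choose r wo hr using fun δ => exists_ord_eq {s | ht s = δ}
  refine ⟨fun t => typein (r (ht t)) ⟨t, rfl⟩, fun t => (hr _).symm ▸ typein_lt_type _ _,
    fun s t hst hc => ?_⟩
  have hcode : ∀ {δ} (s : T) (hs : ht s = δ),
      typein (r (ht s)) ⟨s, rfl⟩ = typein (r δ) ⟨s, hs⟩ := by
    rintro _ _ rfl; rfl
  dsimp only at hc
  rw [hcode s hst] at hc
  exact congrArg Subtype.val (typein_injective _ hc)

theorem FuncProp.exists_guess_of_codes {μ : Cardinal} (hf : FuncProp μ) {T : Type}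
    {lt : T → T → Prop} {ht : T → Ordinal} (hpred : ∀ t, ∀ β < ht t, ∃ s, lt s t ∧ ht s = β)
    (hsurj : ∀ α < μ.ord, ∃ t, ht t = α) {c : T → Ordinal} {b : Ordinal → Ordinal}
    (hc : ∀ t, c t < b (ht t)) :
    ∃ g : Ordinal → Ordinal, ∀ α < μ.ord, ∃ u,
      ∀ δ < α, b δ < α → ∃ s, lt s u ∧ ht s = δ ∧ c s = g δ := by
  choose top htop using hsurj
  choose pred hpred_lt hpred_ht using hpred
  let f : Ordinal → Ordinal → Ordinal := fun β δ =>
    if h : β < μ.ord ∧ δ < β then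
      if c (pred (top β h.1) δ ((htop β h.1).symm ▸ h.2)) < β then
        c (pred (top β h.1) δ ((htop β h.1).symm ▸ h.2))
      else 0
    else 0
  obtain ⟨g, -, hg⟩ := hf f fun β hβ δ hδ => by
    simp only [f, dif_pos (And.intro hβ hδ)]
    split_ifs with h
    exacts [h, pos_of_gt hδ]
  refine ⟨g, fun α hα => ?_⟩
  obtain ⟨β, hαβ, hβ, hfg⟩ := hg α hα
  refine ⟨top β hβ, fun δ hδ hbδ => ?_⟩
  have hδβ : δ < ht (top β hβ) := (htop β hβ).symm ▸ hδ.trans_le hαβ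
  refine ⟨pred _ δ hδβ, hpred_lt _ _ _, hpred_ht _ _ _, ?_⟩
  rw [← hfg δ hδ]
  simp only [f, dif_pos (And.intro hβ (hδ.trans_le hαβ))]
  rw [if_pos]
  calc _ < b (ht _) := hc _
    _ = b δ := by rw [hpred_ht]
    _ < β := hbδ.trans_le hαβ

theorem treeProp_of_funcProp {μ : Cardinal} (hμ : ℵ₀ ≤ μ) (hf : FuncProp μ) : TreeProp μ := by
  intro T lt ht _ _ _ hpred hlin hltord hsurj hsmall
  obtain ⟨c, hc, hinj⟩ := exists_levelwise_injective_code ht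
  set b : Ordinal → Ordinal := fun δ => (#{s | ht s = δ}).ord
  obtain ⟨g, hg⟩ := hf.exists_guess_of_codes (b := b) hpred hsurj hc
  set threshold : Ordinal → Ordinal := fun δ => Order.succ (max δ (b δ))
  have hlt_threshold : ∀ δ, δ < threshold δ ∧ b δ < threshold δ := fun δ =>
    ⟨Order.lt_succ_of_le (le_max_left _ _), Order.lt_succ_of_le (le_max_right _ _)⟩
  have hthreshold : ∀ t, threshold (ht t) < μ.ord := fun t =>
    (Cardinal.isSuccLimit_ord hμ).succ_lt (max_lt (hltord t) (ord_lt_ord.2 (hsmall _)))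
  have hbelow : ∀ α < μ.ord, ∃ u, ∀ t, c t = g (ht t) → threshold (ht t) ≤ α → lt t u := by
    intro α hα
    obtain ⟨u, hu⟩ := hg α hα
    refine ⟨u, fun t htg htα => ?_⟩
    obtain ⟨s, hsu, hs, hcs⟩ := hu (ht t) ((hlt_threshold _).1.trans_le htα)
      ((hlt_threshold _).2.trans_le htα)
    rwa [← hinj s t hs (hcs.trans htg.symm)]
  refine ⟨{t | c t = g (ht t)}, fun s hs t ht' => ?_, fun δ hδ => ?_⟩
  · obtain ⟨u, hu⟩ := hbelow _ (max_lt (hthreshold s) (hthreshold t))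
    exact hlin s t u (hu s hs (le_max_left _ _)) (hu t ht' (le_max_right _ _))
  · obtain ⟨t, rfl⟩ := hsurj δ hδ
    obtain ⟨u, hu⟩ := hg _ (hthreshold t)
    obtain ⟨s, -, hs, hcs⟩ := hu (ht t) (hlt_threshold _).1 (hlt_threshold _).2
    exact ⟨s, show c s = g (ht s) by rw [hs, hcs], hs⟩

/-- Shelah: for a strongly inaccessible `μ`, the tree property is equivalent to the
combinatorial function-guessing property. -/
theorem stmt_7 (μ : Cardinal) (h1 : ℵ₀ < μ) (h2 : μ.IsRegular)
    (h3 : μ.IsStrongLimit) : TreeProp μ ↔ FuncProp μ :=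
  ⟨funcProp_of_treeProp h1 h2 h3, treeProp_of_funcProp h2.aleph0_le⟩
end

section
/- There exists a linear order I of cardinality ℵ₁ such that the square I × I, with the coordinatewise partial order, is the union of countably many chains. -/
/-!
Following Todorcevic, recursion along the countable ordinals, using a cofinal ω-sequence
(ladder) at each limit, produces maps `e β : β → ℕ` that are finite-to-one and coherent:
`e α` and `e β` differ at only finitely many points below `α`. Order `ω₁` lexicographically
by the maps `e β`, padded with `⊥` outside `β`.

For `b < c` choose `M` above `e c b` and above both maps on the finite set where `e b` and `e c`
disagree; the points where `e b` or `e c` is below `M` form a finite set `F`. Colour the pair by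
`M` and the list of values of `(e b, e c)` along `F` in increasing order, a countable invariant.
If `(b, c)` and `(b', c')` have the same colour and `e b <lex e b'` with first difference at `δ`,
then `F` and `F'` agree below `δ`, so the lists force `e c` and `e c'` to agree below `δ`, while
at `δ` the choice of `M` forces `e c δ < e c' δ`. Hence every colour class is a chain.
-/

open Cardinal Set Order

theorem Finset.sort_eq_sort_filter_le_append {α : Type*} [LinearOrder α] (s : Finset α) (d : α) :
    s.sort = (s.filter (· ≤ d)).sort ++ (s.filter (d < ·)).sort := by
  refine (s.sortedLT_sort.pairwise).eq_of_mem_iff (List.pairwise_append.2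
    ⟨(Finset.sortedLT_sort _).pairwise, (Finset.sortedLT_sort _).pairwise, ?_⟩) fun w => ?_
  · simp only [Finset.mem_sort, Finset.mem_filter]
    exact fun a ha b hb => ha.2.trans_lt hb.2
  · simp only [List.mem_append, Finset.mem_sort, Finset.mem_filter]
    constructor
    · exact fun hw => (le_or_gt w d).imp (⟨hw, ·⟩) (⟨hw, ·⟩)
    · rintro (h | h) <;> exact h.1

theorem Finset.apply_eq_of_map_sort_eq {α β : Type*} [LinearOrder α] {s t : Finset α}
    {f g : α → β} (h : s.sort.map f = t.sort.map g) {w : α}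
    (hst : s.filter (· ≤ w) = t.filter (· ≤ w)) (hw : w ∈ s) : f w = g w := by
  rw [s.sort_eq_sort_filter_le_append w, t.sort_eq_sort_filter_le_append w, List.map_append,
    List.map_append, hst] at h
  refine List.map_inj_left.1 (List.append_inj h (by simp)).1 w ?_
  simp [← hst, hw]

theorem Finset.filter_le_eq_of_mem_iff {α : Type*} [LinearOrder α] {s t : Finset α} {w : α}
    (hlt : ∀ v < w, v ∈ s ↔ v ∈ t) (hw : w ∈ s ↔ w ∈ t) :
    s.filter (· ≤ w) = t.filter (· ≤ w) := by
  ext v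
  simp only [Finset.mem_filter, and_congr_left_iff, le_iff_lt_or_eq]
  rintro (hv | rfl)
  exacts [hlt v hv, hw]

namespace Countryman

universe u

theorem exists_cofinal_seq {β : Ordinal.{u}} (hβ : IsSuccLimit β) (hc : β.card ≤ ℵ₀) :
    ∃ l : ℕ → Ordinal.{u}, (∀ n, l n < β) ∧ ∀ ξ < β, ∃ n, ξ < l n := by
  have hcount : (Iio β).Countable := by
    rw [← le_aleph0_iff_set_countable, mk_Iio_ordinal, lift_le_aleph0]
    exact hc
  obtain ⟨f, hf⟩ := hcount.exists_eq_range ⟨0, hβ.bot_lt⟩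
  refine ⟨fun n => f n + 1, fun n => hβ.add_one_lt (hf ▸ mem_range_self n : f n ∈ Iio β),
    fun ξ hξ => ?_⟩
  obtain ⟨n, rfl⟩ : ξ ∈ range f := hf ▸ hξ
  exact ⟨n, lt_add_one _⟩

open Classical in
noncomputable def ladder (β : Ordinal.{u}) : ℕ → Ordinal.{u} :=
  if h : IsSuccLimit β ∧ β.card ≤ ℵ₀ then (exists_cofinal_seq h.1 h.2).choose else fun _ => 0

theorem ladder_lt {β : Ordinal.{u}} (hβ : IsSuccLimit β) (hc : β.card ≤ ℵ₀) (n : ℕ) :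
    ladder β n < β := by
  rw [ladder, dif_pos ⟨hβ, hc⟩]
  exact (exists_cofinal_seq hβ hc).choose_spec.1 n

theorem exists_lt_ladder {β ξ : Ordinal.{u}} (hβ : IsSuccLimit β) (hc : β.card ≤ ℵ₀)
    (hξ : ξ < β) : ∃ n, ξ < ladder β n := by
  rw [ladder, dif_pos ⟨hβ, hc⟩]
  exact (exists_cofinal_seq hβ hc).choose_spec.2 ξ hξ

open Classical in
noncomputable def ladderIndex (β ξ : Ordinal.{u}) : ℕ :=
  if h : ∃ n, ξ < ladder β n then Nat.find h else 0

theorem lt_ladder_ladderIndex {β ξ : Ordinal.{u}} (hβ : IsSuccLimit β) (hc : β.card ≤ ℵ₀)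
    (hξ : ξ < β) : ξ < ladder β (ladderIndex β ξ) := by
  classical
  have h := exists_lt_ladder hβ hc hξ
  rw [ladderIndex, dif_pos h]
  exact Nat.find_spec h

theorem ladderIndex_mono {β ξ ζ : Ordinal.{u}} (hβ : IsSuccLimit β) (hc : β.card ≤ ℵ₀)
    (hξζ : ξ ≤ ζ) (hζ : ζ < β) : ladderIndex β ξ ≤ ladderIndex β ζ := by
  classical
  have hlt := hξζ.trans_lt (lt_ladder_ladderIndex hβ hc hζ)
  rw [ladderIndex, dif_pos ⟨_, hlt⟩]
  exact Nat.find_min' _ hlt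

/-- At a countable limit, raising the value to at least the ladder index makes the sequence
finite-to-one, while the ladder indices being monotone keeps it coherent. -/
noncomputable def ladderSeq : Ordinal.{u} → Ordinal.{u} → ℕ := fun β =>
  Ordinal.limitRecOn β (fun _ => 0)
    (fun γ seq ξ => if ξ = γ then 0 else seq ξ)
    (fun β hβ seq ξ =>
      if hc : β.card ≤ ℵ₀ then
        max (seq (ladder β (ladderIndex β ξ)) (ladder_lt hβ hc _) ξ) (ladderIndex β ξ)
      else 0)

theorem ladderSeq_add_one (γ ξ : Ordinal.{u}) :
    ladderSeq (γ + 1) ξ = if ξ = γ then 0 else ladderSeq γ ξ := by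
  rw [ladderSeq, Ordinal.limitRecOn_add_one]
  rfl

theorem ladderSeq_of_isSuccLimit {β : Ordinal.{u}} (hβ : IsSuccLimit β) (hc : β.card ≤ ℵ₀)
    (ξ : Ordinal.{u}) :
    ladderSeq β ξ = max (ladderSeq (ladder β (ladderIndex β ξ)) ξ) (ladderIndex β ξ) := by
  rw [ladderSeq, Ordinal.limitRecOn_limit _ _ _ _ hβ, dif_pos hc]
  rfl

def FiniteToOneAt (β : Ordinal.{u}) : Prop :=
  ∀ m : ℕ, {ξ | ξ < β ∧ ladderSeq β ξ < m}.Finite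

def CoherentAt (β : Ordinal.{u}) : Prop :=
  ∀ α < β, {ξ | ξ < α ∧ ladderSeq β ξ ≠ ladderSeq α ξ}.Finite

theorem CoherentAt.finite_ne {α β : Ordinal.{u}} (hα : CoherentAt α) (hβ : CoherentAt β) :
    {ξ | ξ < α ∧ ξ < β ∧ ladderSeq α ξ ≠ ladderSeq β ξ}.Finite := by
  rcases lt_trichotomy α β with h | rfl | h
  · exact (hβ α h).subset fun ξ ⟨hξ, _, hne⟩ => ⟨hξ, Ne.symm hne⟩
  · exact Set.finite_empty.subset fun ξ ⟨_, _, hne⟩ => hne rfl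
  · exact (hα β h).subset fun ξ ⟨_, hξ, hne⟩ => ⟨hξ, hne⟩

theorem FiniteToOneAt.add_one {γ : Ordinal.{u}} (h : FiniteToOneAt γ) :
    FiniteToOneAt (γ + 1) := by
  intro m
  refine ((h m).insert γ).subset ?_
  rintro ξ ⟨hξ, hm⟩
  rcases eq_or_ne ξ γ with rfl | hne
  · exact mem_insert _ _
  · rw [ladderSeq_add_one, if_neg hne] at hm
    exact mem_insert_of_mem _ ⟨(lt_add_one_iff.1 hξ).lt_of_ne hne, hm⟩

theorem CoherentAt.add_one {γ : Ordinal.{u}} (h : CoherentAt γ) : CoherentAt (γ + 1) := by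
  intro α hα
  have hαγ := lt_add_one_iff.1 hα
  have hsub : {ξ | ξ < α ∧ ladderSeq (γ + 1) ξ ≠ ladderSeq α ξ} ⊆
      {ξ | ξ < α ∧ ladderSeq γ ξ ≠ ladderSeq α ξ} := fun ξ ⟨hξ, hne⟩ =>
    ⟨hξ, by rwa [ladderSeq_add_one, if_neg (hξ.trans_le hαγ).ne] at hne⟩
  rcases hαγ.lt_or_eq with hαγ | rfl
  · exact (h α hαγ).subset hsub
  · exact Set.finite_empty.subset fun ξ hξ => (hsub hξ).2 rfl

theorem FiniteToOneAt.of_isSuccLimit {β : Ordinal.{u}} (hβ : IsSuccLimit β) (hc : β.card ≤ ℵ₀)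
    (h : ∀ n, FiniteToOneAt (ladder β n)) : FiniteToOneAt β := by
  intro m
  refine ((finite_Iio m).biUnion fun n _ => h n m).subset ?_
  rintro ξ ⟨hξ, hm⟩
  rw [ladderSeq_of_isSuccLimit hβ hc, max_lt_iff] at hm
  exact mem_biUnion hm.2 ⟨lt_ladder_ladderIndex hβ hc hξ, hm.1⟩

theorem CoherentAt.of_isSuccLimit {β : Ordinal.{u}} (hβ : IsSuccLimit β) (hc : β.card ≤ ℵ₀)
    (hF : ∀ n, FiniteToOneAt (ladder β n)) (hC : ∀ α < β, CoherentAt α) : CoherentAt β := by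
  intro α hα
  let K := ladderIndex β α
  refine ((finite_Iic K).biUnion fun n _ =>
    ((hC _ (ladder_lt hβ hc n)).finite_ne (hC α hα)).union (hF n n)).subset ?_
  rintro ξ ⟨hξ, hne⟩
  have hξβ := hξ.trans hα
  let n := ladderIndex β ξ
  have hξn : ξ < ladder β n := lt_ladder_ladderIndex hβ hc hξβ
  refine mem_biUnion (ladderIndex_mono hβ hc hξ.le hα) ?_
  rw [ladderSeq_of_isSuccLimit hβ hc] at hne
  by_cases hn : n ≤ ladderSeq (ladder β n) ξ
  · rw [max_eq_left hn] at hne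
    exact Or.inl ⟨hξn, hξ, hne⟩
  · exact Or.inr ⟨hξn, not_le.1 hn⟩

theorem finiteToOneAt_and_coherentAt (β : Ordinal.{u}) (hc : β.card ≤ ℵ₀) :
    FiniteToOneAt β ∧ CoherentAt β := by
  induction β using Ordinal.limitRecOn with
  | zero =>
    exact ⟨fun _ => Set.finite_empty.subset fun ξ hξ => (not_lt_bot hξ.1).elim,
      fun α hα => (not_lt_bot hα).elim⟩
  | add_one γ ih =>
    have := ih ((Ordinal.card_le_card (le_self_add (a := γ) (b := 1))).trans hc)
    exact ⟨this.1.add_one, this.2.add_one⟩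
  | limit β hβ ih =>
    have ih' : ∀ α < β, FiniteToOneAt α ∧ CoherentAt α :=
      fun α hα => ih α hα ((Ordinal.card_le_card hα.le).trans hc)
    exact ⟨.of_isSuccLimit hβ hc fun n => (ih' _ (ladder_lt hβ hc n)).1,
      .of_isSuccLimit hβ hc (fun n => (ih' _ (ladder_lt hβ hc n)).1) fun α hα => (ih' α hα).2⟩

structure CoherentSeq (ι : Type*) [LinearOrder ι] where
  toFun : ι → ι → ℕ
  finite_lt : ∀ (b : ι) (m : ℕ), {w | w < b ∧ toFun b w < m}.Finite
  finite_ne : ∀ ⦃b c : ι⦄, b < c → {w | w < b ∧ toFun b w ≠ toFun c w}.Finite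

noncomputable def CoherentSeq.ofCountableIio {ι : Type u} [LinearOrder ι] [WellFoundedLT ι]
    (h : ∀ b : ι, (Iio b).Countable) : CoherentSeq ι :=
  let t := Ordinal.typein (α := ι) (· < ·)
  have ht : ∀ b, FiniteToOneAt (t b) ∧ CoherentAt (t b) := fun b =>
    finiteToOneAt_and_coherentAt _ (mk_le_aleph0_iff.2 (h b).to_subtype)
  { toFun := fun b w => ladderSeq (t b) (t w)
    finite_lt := fun b m => ((ht b).1 m).preimage (Ordinal.typein_injective _).injOn |>.subset
      fun _ ⟨hw, hm⟩ => ⟨(Ordinal.typein_lt_typein _).2 hw, hm⟩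
    finite_ne := fun _ c hbc =>
      ((ht c).2 _ ((Ordinal.typein_lt_typein _).2 hbc)).preimage
        (Ordinal.typein_injective _).injOn |>.subset
      fun _ ⟨hw, hne⟩ => ⟨(Ordinal.typein_lt_typein _).2 hw, Ne.symm hne⟩ }

namespace CoherentSeq

variable {ι : Type*} [LinearOrder ι] (e : CoherentSeq ι)

instance : CoeFun (CoherentSeq ι) fun _ => ι → ι → ℕ := ⟨toFun⟩

def pad (b : ι) : ι → WithBot ℕ := fun w => if w < b then WithBot.some (e b w) else ⊥

variable {e} {b c b' c' w : ι}

theorem pad_of_lt (h : w < b) : e.pad b w = WithBot.some (e b w) := if_pos h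

theorem pad_ne_bot_iff : e.pad b w ≠ ⊥ ↔ w < b := by
  unfold pad; split_ifs with h <;> simp [h]

theorem pad_injective : Function.Injective e.pad := by
  intro b c h
  by_contra hne
  rcases lt_or_gt_of_ne hne with hbc | hcb
  · exact lt_irrefl b (pad_ne_bot_iff.1 (h ▸ pad_ne_bot_iff.2 hbc))
  · exact lt_irrefl c (pad_ne_bot_iff.1 (h ▸ pad_ne_bot_iff.2 hcb))

theorem lt_and_le_of_pad_lt {δ : ι} (hbelow : ∀ w < δ, e.pad b w = e.pad b' w)
    (hδ : e.pad b δ < e.pad b' δ) : δ < b' ∧ δ ≤ b := by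
  have hδb' := pad_ne_bot_iff.1 (ne_bot_of_gt hδ)
  refine ⟨hδb', not_lt.1 fun hbδ => lt_irrefl b ((pad_ne_bot_iff (e := e)).1 ?_)⟩
  rw [hbelow b hbδ]
  exact pad_ne_bot_iff.2 (hbδ.trans hδb')

variable (e) in
noncomputable def bound (b c : ι) : ℕ :=
  max (sSup ((fun w => max (e b w) (e c w)) '' {w | w < b ∧ e b w ≠ e c w})) (e c b) + 1

theorem lt_bound_of_ne (hbc : b < c) (hw : w < b) (hne : e b w ≠ e c w) :
    e b w < e.bound b c ∧ e c w < e.bound b c := by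
  have := le_csSup ((e.finite_ne hbc).image fun w => max (e b w) (e c w)).bddAbove
    (mem_image_of_mem _ ⟨hw, hne⟩)
  unfold bound
  omega

theorem lt_bound_self : e c b < e.bound b c := by
  unfold bound
  omega

variable (e) in
noncomputable def support (b c : ι) : Finset ι :=
  ((e.finite_lt b (e.bound b c)).union (e.finite_lt c (e.bound b c))).toFinset

theorem mem_support : w ∈ e.support b c ↔
    (w < b ∧ e b w < e.bound b c) ∨ (w < c ∧ e c w < e.bound b c) := by
  simp [support]

theorem mem_support_iff_of_lt (hbc : b < c) (hw : w < b) :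
    w ∈ e.support b c ↔ e b w < e.bound b c := by
  refine mem_support.trans ⟨?_, fun h => Or.inl ⟨hw, h⟩⟩
  rintro (⟨-, h⟩ | ⟨-, h⟩)
  · exact h
  · by_cases hne : e b w = e c w
    · exact hne ▸ h
    · exact (lt_bound_of_ne hbc hw hne).1

theorem eq_of_notMem_support (hbc : b < c) (hw : w < b) (h : w ∉ e.support b c) :
    e c w = e b w := by
  by_contra hne
  exact h (mem_support.2 (Or.inl ⟨hw, (lt_bound_of_ne hbc hw (Ne.symm hne)).1⟩))

theorem bound_le_of_notMem_support (hw : w < c) (h : w ∉ e.support b c) :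
    e.bound b c ≤ e c w :=
  not_lt.1 fun hlt => h (mem_support.2 (Or.inr ⟨hw, hlt⟩))

variable (e) in
noncomputable def pairType (b c : ι) : ℕ × List (WithBot ℕ × WithBot ℕ) :=
  (e.bound b c, (e.support b c).sort.map fun w => (e.pad b w, e.pad c w))

theorem pad_eq_of_pairType_eq (h : e.pairType b c = e.pairType b' c') (hw : w ∈ e.support b c)
    (hagree : (e.support b c).filter (· ≤ w) = (e.support b' c').filter (· ≤ w)) :
    e.pad b w = e.pad b' w ∧ e.pad c w = e.pad c' w :=
  Prod.ext_iff.1 (Finset.apply_eq_of_map_sort_eq (Prod.ext_iff.1 h).2 hagree hw)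

theorem mem_support_iff_of_pad_eq (hbc : b < c) (hbc' : b' < c')
    (hM : e.bound b c = e.bound b' c') (hw : w < b) (hw' : w < b')
    (heq : e.pad b w = e.pad b' w) : w ∈ e.support b c ↔ w ∈ e.support b' c' := by
  rw [pad_of_lt hw, pad_of_lt hw', WithBot.coe_inj] at heq
  rw [mem_support_iff_of_lt hbc hw, mem_support_iff_of_lt hbc' hw', heq, hM]

theorem toFun_lt_of_pad_lt (hbc : b < c) (hbc' : b' < c') (hM : e.bound b c = e.bound b' c')
    {δ : ι} (hδb : δ ≤ b) (hδb' : δ < b') (hδ : e.pad b δ < e.pad b' δ)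
    (hδF : δ ∈ e.support b c → δ ∉ e.support b' c') : e c δ < e c' δ := by
  -- Either `e c δ` and `e c' δ` are the values of `e b δ < e b' δ`, or `δ` lies in the
  -- first support only, so that `e c δ < bound ≤ e c' δ`.
  suffices δ ∈ e.support b c ∧ e c δ < e.bound b c ∨ e c δ < e c' δ by
    rcases this with ⟨hF, hlt⟩ | hlt
    · exact hlt.trans_le (hM ▸ bound_le_of_notMem_support (hδb'.trans hbc') (hδF hF))
    · exact hlt
  rcases hδb.lt_or_eq with hδb | rfl
  · rw [pad_of_lt hδb, pad_of_lt hδb', WithBot.coe_lt_coe] at hδ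
    by_cases hne : e b δ = e c δ
    · by_cases hne' : e b' δ = e c' δ
      · exact Or.inr (hne ▸ hne' ▸ hδ)
      · have hδM := (lt_bound_of_ne hbc' hδb' hne').1
        refine absurd ((mem_support_iff_of_lt hbc' hδb').2 hδM) (hδF ?_)
        exact (mem_support_iff_of_lt hbc hδb).2 (hM ▸ hδ.trans hδM)
    · have hδM := lt_bound_of_ne hbc hδb hne
      exact Or.inl ⟨(mem_support_iff_of_lt hbc hδb).2 hδM.1, hδM.2⟩
  · exact Or.inl ⟨mem_support.2 (Or.inr ⟨hbc, lt_bound_self⟩), lt_bound_self⟩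

theorem lex_lt_of_pairType_eq (hbc : b < c) (hbc' : b' < c')
    (h : e.pairType b c = e.pairType b' c') (hlt : toLex (e.pad b) < toLex (e.pad b')) :
    toLex (e.pad c) < toLex (e.pad c') := by
  obtain ⟨δ, hbelow, hδ⟩ : ∃ δ, (∀ w < δ, e.pad b w = e.pad b' w) ∧ e.pad b δ < e.pad b' δ := hlt
  obtain ⟨hδb', hδb⟩ := lt_and_le_of_pad_lt hbelow hδ
  have hM : e.bound b c = e.bound b' c' := (Prod.ext_iff.1 h).1
  have hagree : ∀ w < δ, w ∈ e.support b c ↔ w ∈ e.support b' c' := fun w hw =>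
    mem_support_iff_of_pad_eq hbc hbc' hM (hw.trans_le hδb) (hw.trans hδb') (hbelow w hw)
  have hδF : δ ∈ e.support b c → δ ∉ e.support b' c' := fun hF hF' =>
    hδ.ne (pad_eq_of_pairType_eq h hF
      (Finset.filter_le_eq_of_mem_iff hagree (iff_of_true hF hF'))).1
  refine ⟨δ, fun w hw => ?_, ?_⟩
  · change e.pad c w = e.pad c' w
    have hwb := hw.trans_le hδb
    have hwb' := hw.trans hδb'
    by_cases hwF : w ∈ e.support b c
    · exact (pad_eq_of_pairType_eq h hwF (Finset.filter_le_eq_of_mem_iff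
        (fun v hv => hagree v (hv.trans hw)) (hagree w hw))).2
    · have hwF' := (hagree w hw).not.1 hwF
      rw [pad_of_lt (hwb.trans hbc), pad_of_lt (hwb'.trans hbc'),
        eq_of_notMem_support hbc hwb hwF, eq_of_notMem_support hbc' hwb' hwF',
        ← pad_of_lt hwb, ← pad_of_lt hwb', hbelow w hw]
  · change e.pad c δ < e.pad c' δ
    rw [pad_of_lt (hδb.trans_lt hbc), pad_of_lt (hδb'.trans hbc'), WithBot.coe_lt_coe]
    exact toFun_lt_of_pad_lt hbc hbc' hM hδb hδb' hδ hδF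

variable [WellFoundedLT ι]

theorem lex_le_and_lex_le_of_pairType_eq (hbc : b < c) (hbc' : b' < c')
    (h : e.pairType b c = e.pairType b' c') :
    (toLex (e.pad b) ≤ toLex (e.pad b') ∧ toLex (e.pad c) ≤ toLex (e.pad c')) ∨
      (toLex (e.pad b') ≤ toLex (e.pad b) ∧ toLex (e.pad c') ≤ toLex (e.pad c)) := by
  rcases lt_trichotomy (toLex (e.pad b)) (toLex (e.pad b')) with hlt | heq | hgt
  · exact Or.inl ⟨hlt.le, (lex_lt_of_pairType_eq hbc hbc' h hlt).le⟩
  · obtain rfl := pad_injective (toLex.injective heq)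
    exact (le_total (toLex (e.pad c)) (toLex (e.pad c'))).imp (⟨le_rfl, ·⟩) (⟨le_rfl, ·⟩)
  · exact Or.inr ⟨hgt.le, (lex_lt_of_pairType_eq hbc' hbc h.symm hgt).le⟩

def Line (_ : CoherentSeq ι) : Type _ := ι

variable (e) in
def toLine : ι ≃ e.Line := Equiv.refl ι

noncomputable instance : LinearOrder e.Line :=
  LinearOrder.lift' (fun s => toLex (e.pad (e.toLine.symm s)))
    (toLex.injective.comp (pad_injective.comp e.toLine.symm.injective))

theorem toLine_le_toLine : e.toLine b ≤ e.toLine c ↔ toLex (e.pad b) ≤ toLex (e.pad c) := Iff.rfl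

variable (e) in
noncomputable def lineColour (p : e.Line × e.Line) : Ordering × ℕ × List (WithBot ℕ × WithBot ℕ) :=
  let b := e.toLine.symm p.1
  let c := e.toLine.symm p.2
  (compare b c, e.pairType (min b c) (max b c))

theorem le_or_le_of_lineColour_eq {p q : e.Line × e.Line} (h : e.lineColour p = e.lineColour q) :
    p ≤ q ∨ q ≤ p := by
  obtain ⟨⟨b, c⟩, rfl⟩ := (e.toLine.prodCongr e.toLine).surjective p
  obtain ⟨⟨b', c'⟩, rfl⟩ := (e.toLine.prodCongr e.toLine).surjective q
  simp only [lineColour, Equiv.prodCongr_apply, Prod.map, Equiv.symm_apply_apply,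
    Prod.mk.injEq] at h
  obtain ⟨hcmp, htype⟩ := h
  simp only [Equiv.prodCongr_apply, Prod.map, Prod.mk_le_mk, toLine_le_toLine]
  rcases lt_trichotomy b c with hbc | rfl | hcb
  · have hbc' : b' < c' := compare_lt_iff_lt.1 (hcmp.symm.trans (compare_lt_iff_lt.2 hbc))
    rw [min_eq_left hbc.le, max_eq_right hbc.le, min_eq_left hbc'.le, max_eq_right hbc'.le] at htype
    exact lex_le_and_lex_le_of_pairType_eq hbc hbc' htype
  · obtain rfl : b' = c' := compare_eq_iff_eq.1 (hcmp.symm.trans (compare_eq_iff_eq.2 rfl))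
    exact (le_total (toLex (e.pad b)) (toLex (e.pad b'))).imp (fun h => ⟨h, h⟩) (fun h => ⟨h, h⟩)
  · have hcb' : c' < b' := compare_gt_iff_gt.1 (hcmp.symm.trans (compare_gt_iff_gt.2 hcb))
    rw [min_eq_right hcb.le, max_eq_left hcb.le, min_eq_right hcb'.le, max_eq_left hcb'.le] at htype
    exact (lex_le_and_lex_le_of_pairType_eq hcb hcb' htype).imp And.symm And.symm

variable (e) in
theorem exists_chain_colouring : ∃ f : e.Line × e.Line → ℕ, ∀ p q, f p = f q → p ≤ q ∨ q ≤ p := by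
  obtain ⟨g, hg⟩ := exists_injective_nat (Ordering × ℕ × List (WithBot ℕ × WithBot ℕ))
  exact ⟨g ∘ e.lineColour, fun p q h => le_or_le_of_lineColour_eq (hg h)⟩

end CoherentSeq

end Countryman

/-- Shelah: there is a linear order `I` of cardinality `ℵ₁` such that `I × I`, with
the coordinatewise partial order, is the union of countably many chains. -/
theorem stmt_8 :
    ∃ (I : Type) (_ : LinearOrder I), #I = Cardinal.aleph 1 ∧
      ∃ f : I × I → ℕ, ∀ p q : I × I, f p = f q → p ≤ q ∨ q ≤ p := by
  have hcount : ∀ b : (aleph 1).ord.ToType, (Set.Iio b).Countable := by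
    intro b
    have := mk_Iio_lt b (by simp)
    rw [mk_ord_toType] at this
    exact le_aleph0_iff_set_countable.1 (lt_aleph_one_iff.1 this)
  let e := Countryman.CoherentSeq.ofCountableIio hcount
  exact ⟨e.Line, inferInstance, mk_ord_toType _, e.exists_chain_colouring⟩
end

section
/- If 2^{ℵ_α} ≤ ℵ_{α+n}, then there is a Jónsson algebra on ℵ_{α+n}; that is, there is an algebra with countably many operations on a set of cardinality ℵ_{α+n} with no proper subalgebra of the same cardinality. -/
/-!
Let `κ = ℵ_α`, realise `ℵ_{α+n} = κ^{+n}` as its initial ordinal, and let `U j` be the initial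
segment of cardinality `κ^{+j}`. For each `x`, two binary operations give bijections between
`Iio x` and the initial segment with as many elements, in both directions. In a subalgebra `S`
of full size, the first shows by downward induction that `S ∩ U j` still has `κ^{+j}` elements;
the second shows that once `U j ⊆ S`, any `x ∈ S ∩ U (j+1)` with `κ^{+j}` predecessors drags
`Iio x` into `S`, so `U (j+1) ⊆ S`. The induction starts from `U 0 ⊆ S`, which an
`(n+1)`-ary operation forces: there are only `2 ^ κ ≤ κ^{+n}` pairs `(s, y)` with `s ⊆ U 0` of
size `κ` and `y ∈ U 0`, and they can be enumerated along the `n` higher coordinates so that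
`y = op a v` for some `a ∈ s` and `v` in any prescribed large subsets of the `U (i+1)`; at
cardinality `κ` this is a choice of distinct representatives.
-/

open Cardinal Set Function

namespace Jonsson

universe u

section LinearOrder

variable {A : Type u} [LinearOrder A]

theorem mk_Iio_subtype_le (s : Set A) (x : s) : #(Iio x) ≤ #(Iio (x : A)) :=
  mk_le_of_injective (f := fun y : Iio x => (⟨y.1.1, y.2⟩ : Iio (x : A))) fun _ _ h => by
    simpa [Subtype.ext_iff] using h

def cardSeg (c : Cardinal.{u}) : Set A := {y | #(Iio y) < c}

theorem cardSeg_mono {c d : Cardinal.{u}} (h : c ≤ d) : cardSeg (A := A) c ⊆ cardSeg d :=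
  fun _ hy => lt_of_lt_of_le hy h

theorem cardSeg_mk_eq_univ (h : ∀ x : A, #(Iio x) < #A) : cardSeg (A := A) #A = Set.univ :=
  eq_univ_of_forall h

theorem mk_Iio_le_of_mem_cardSeg_succ {c : Cardinal.{u}} {x : A}
    (hx : x ∈ cardSeg (Order.succ c)) : #(Iio x) ≤ c :=
  Order.lt_succ_iff.mp hx

theorem exists_lt_mem_diff {L s : Set A} {y : A} (hL : ℵ₀ ≤ #L)
    (hy : #(Iio y) < #L) (hs : #s < #L) : ∃ x ∈ L, y < x ∧ x ∉ s := by
  by_contra! h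
  have hsub : L ⊆ insert y (Iio y) ∪ s := fun x hx => by
    by_cases hxs : x ∈ s
    · exact Or.inr hxs
    · exact Or.inl (le_iff_eq_or_lt.mp (not_lt.mp fun hyx => hxs (h x hx hyx)))
  refine (mk_le_mk_of_subset hsub).not_gt ?_
  refine (mk_union_le _ _).trans_lt (add_lt_of_lt hL ?_ hs)
  exact mk_insert_le.trans_lt (add_lt_of_lt hL hy (one_lt_aleph0.trans_le hL))

variable [WellFoundedLT A]

theorem mk_le_of_forall_mk_Iio_lt {c : Cardinal.{u}} (h : ∀ x : A, #(Iio x) < c) : #A ≤ c := by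
  have htype : Ordinal.type (α := A) (· < ·) ≤ c.ord := by
    by_contra! hlt
    obtain ⟨x, hx⟩ := Ordinal.typein_surj (· < ·) hlt
    have hx' : (Ordinal.typein (α := A) (· < ·) x).card = c := by rw [hx, card_ord]
    exact (h x).ne hx'
  simpa using Ordinal.card_le_card htype

theorem exists_le_mk_inter_Iio {s : Set A} {c : Cardinal.{u}} (h : c < #s) :
    ∃ x ∈ s, c ≤ #(s ∩ Iio x : Set A) := by
  by_contra! hs
  refine (mk_le_of_forall_mk_Iio_lt fun x : s => ?_).not_gt h
  refine lt_of_le_of_lt ?_ (hs x x.2)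
  exact mk_le_of_injective (f := fun y : Iio x => (⟨y.1.1, y.1.2, y.2⟩ : (s ∩ Iio (x : A) : Set A)))
    fun _ _ h => by simpa [Subtype.ext_iff] using h

theorem mk_cardSeg {c : Cardinal.{u}} (hc : c ≤ #A) : #(cardSeg (A := A) c) = c := by
  refine le_antisymm (mk_le_of_forall_mk_Iio_lt fun y => (mk_Iio_subtype_le _ y).trans_lt y.2) ?_
  by_cases hbig : ∃ x : A, c ≤ #(Iio x)
  · obtain ⟨m, hm, hmin⟩ := wellFounded_lt.has_min {x | c ≤ #(Iio x)} hbig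
    refine hm.trans (mk_le_mk_of_subset fun y hy => ?_)
    exact not_le.mp fun (hy' : c ≤ #(Iio y)) => hmin y hy' hy
  · simp only [not_exists, not_le] at hbig
    rwa [show cardSeg c = Set.univ from eq_univ_of_forall hbig, mk_univ]

end LinearOrder

theorem exists_bijOn_of_mk_eq {α : Type u} {s t : Set α} (h : #s = #t) :
    ∃ f : α → α, BijOn f s t := by
  classical
  obtain ⟨e⟩ := Cardinal.eq.mp h
  refine ⟨fun y => if hy : y ∈ s then e ⟨y, hy⟩ else y, ?_, ?_, ?_⟩
  · intro y hy
    simp [hy]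
  · intro y hy z hz hyz
    simpa [hy, hz, Subtype.ext_iff] using e.injective (Subtype.ext (by simpa [hy, hz] using hyz))
  · intro y hy
    refine ⟨e.symm ⟨y, hy⟩, (e.symm ⟨y, hy⟩).2, ?_⟩
    simp

theorem mk_inter_le_of_injOn {α : Type u} {f : α → α} {S s t : Set α} (hS : MapsTo f S S)
    (hf : MapsTo f s t) (hinj : InjOn f s) : #(S ∩ s : Set α) ≤ #(S ∩ t : Set α) := by
  rw [← mk_image_eq_of_injOn _ _ (hinj.mono inter_subset_right)]
  exact mk_le_mk_of_subset (image_subset_iff.mpr fun y hy => ⟨hS hy.1, hf hy.2⟩)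

section Transversal

variable {D K : Type u}

theorem exists_injective_forall_mem_of_wellFoundedLT [LinearOrder D] [WellFoundedLT D]
    (X : D → Set K) (hX : ∀ d, #(Iio d) < #(X d)) :
    ∃ F : D → K, Injective F ∧ ∀ d, F d ∈ X d := by
  have hfree : ∀ d (F : ∀ d' < d, K), (X d \ range fun d' : Iio d => F d' d'.2).Nonempty := by
    intro d F
    rw [sdiff_nonempty]
    intro hsub
    exact ((mk_le_mk_of_subset hsub).trans mk_range_le).not_gt (hX d)
  let F : D → K := wellFounded_lt.fix fun d F => (hfree d F).some
  have hF : ∀ d, F d ∈ X d \ range fun d' : Iio d => F d' := by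
    intro d
    rw [show F d = _ from wellFounded_lt.fix_eq _ d]
    exact (hfree d fun d' _ => F d').some_mem
  refine ⟨F, fun a b hab => ?_, fun d => (hF d).1⟩
  rcases lt_trichotomy a b with hlt | heq | hgt
  · exact absurd ⟨⟨a, hlt⟩, hab⟩ (hF b).2
  · exact heq
  · exact absurd ⟨⟨b, hgt⟩, hab.symm⟩ (hF a).2

theorem exists_injective_forall_mem {κ : Cardinal.{u}} (hD : #D ≤ κ) (X : D → Set K)
    (hX : ∀ d, κ ≤ #(X d)) : ∃ F : D → K, Injective F ∧ ∀ d, F d ∈ X d := by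
  obtain ⟨_, _, hord⟩ := Cardinal.exists_ord_eq_type_lt D
  exact exists_injective_forall_mem_of_wellFoundedLT X fun d =>
    ((mk_Iio_lt d hord).trans_le hD).trans_le (hX d)

-- Enumerate `D` inside the last coordinate: a large `L (last j)` contains some `x` above `d`,
-- and the `d`s below `x` are handled by the inductive hypothesis.
theorem exists_reaching_map {θ : ℕ → Cardinal.{u}} (hθ0 : ℵ₀ ≤ θ 0) (hθ : StrictMono θ) (j : ℕ)
    (T : Fin j → Type u) [∀ i, LinearOrder (T i)] (hT : ∀ i : Fin j, θ (i + 1) ≤ #(T i))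
    (hTIio : ∀ (i : Fin j) (x : T i), #(Iio x) ≤ θ i) (hD : #D ≤ θ j) (X : D → Set K)
    (hX : ∀ d, θ 0 ≤ #(X d)) (γ : D → K) :
    ∃ c : K → ((i : Fin j) → T i) → K, ∀ d (L : (i : Fin j) → Set (T i)),
      (∀ i : Fin j, θ (i + 1) ≤ #(L i)) →
        ∃ a ∈ X d, ∃ b : (i : Fin j) → T i, (∀ i, b i ∈ L i) ∧ c a b = γ d := by
  induction j generalizing D with
  | zero =>
    obtain ⟨F, hFinj, hFX⟩ := exists_injective_forall_mem hD X hX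
    exact ⟨fun a _ => extend F γ id a, fun d _ _ =>
      ⟨F d, hFX d, finZeroElim, finZeroElim, hFinj.extend_apply γ id d⟩⟩
  | succ j ih =>
    obtain ⟨φ⟩ : Nonempty (D ↪ T (Fin.last j)) := (le_def _ _).mp (hD.trans (hT (Fin.last j)))
    have hDx (x : T (Fin.last j)) : #{d // φ d < x} ≤ θ j :=
      le_trans (mk_le_of_injective (f := fun d : {d // φ d < x} => (⟨φ d, d.2⟩ : Iio x))
        fun _ _ h => Subtype.ext (φ.injective (by simpa [Subtype.ext_iff] using h)))
        (hTIio (Fin.last j) x)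
    choose c hc using fun x : T (Fin.last j) =>
      ih (fun i => T i.castSucc) (fun i => hT i.castSucc) (fun i => hTIio i.castSucc) (hDx x)
        (fun d => X d) (fun d => hX d) (fun d => γ d)
    refine ⟨fun a b => c (b (Fin.last j)) a (Fin.init b), fun d L hL => ?_⟩
    have hθj : ℵ₀ ≤ θ (j + 1) := hθ0.trans (hθ.monotone (Nat.zero_le _))
    obtain ⟨x, hxL, hdx, -⟩ := exists_lt_mem_diff (s := ∅) (hθj.trans (hL (Fin.last j)))
      (((hTIio _ _).trans_lt (hθ (Nat.lt_succ_self j))).trans_le (hL (Fin.last j)))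
      (by simpa using (aleph0_pos.trans_le hθj).trans_le (hL (Fin.last j)))
    obtain ⟨a, ha, b, hbL, hab⟩ := hc x ⟨d, hdx⟩ (fun i => L i.castSucc) (fun i => hL i.castSucc)
    refine ⟨a, ha, Fin.snoc b x, fun i => ?_, by simpa using hab⟩
    induction i using Fin.lastCases with
    | last => simpa using hxL
    | cast i => simpa using hbL i

end Transversal

theorem strictMono_iterate_succ {α : Type*} [Preorder α] [SuccOrder α] [NoMaxOrder α] (a : α) :
    StrictMono fun j => Order.succ^[j] a :=
  strictMono_nat_of_lt_succ fun j => by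
    simpa only [iterate_succ_apply'] using Order.lt_succ (Order.succ^[j] a)

section Algebra

open Order

variable {A : Type u} [LinearOrder A] [WellFoundedLT A] {κ : Cardinal.{u}} {n : ℕ}

theorem exists_op_cardSeg_subset (hκ : ℵ₀ ≤ κ) (hA : #A = succ^[n] κ) (h : 2 ^ κ ≤ #A) :
    ∃ op : A → (Fin n → A) → A, ∀ S : Set A, (∀ a ∈ S, ∀ v, (∀ i, v i ∈ S) → op a v ∈ S) →
      (∀ j ≤ n, succ^[j] κ ≤ #(S ∩ cardSeg (succ^[j] κ) : Set A)) → cardSeg κ ⊆ S := by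
  classical
  have hθA : ∀ j ≤ n, succ^[j] κ ≤ #A := fun j hj => hA ▸ (strictMono_iterate_succ κ).monotone hj
  set B : Set A := cardSeg κ
  have hB : #B = κ := mk_cardSeg (hθA 0 (Nat.zero_le n))
  -- `op` has to serve the `2 ^ κ` pairs (large subset of `B`, target in `B`).
  let D : Set (Set A × A) := (𝒫 B ×ˢ B) ∩ {p | κ ≤ #p.1}
  have hD : #D ≤ succ^[n] κ := by
    have hprod : #(𝒫 B ×ˢ B) = 2 ^ κ * κ := by
      rw [mk_congr (Equiv.Set.prod _ _), mk_prod, lift_id, lift_id, mk_powerset, hB]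
    calc #D ≤ #(𝒫 B ×ˢ B) := mk_le_mk_of_subset inter_subset_left
      _ = 2 ^ κ := by rw [hprod, mul_eq_left (hκ.trans (cantor κ).le) (cantor κ).le
          (aleph0_pos.trans_le hκ).ne']
      _ ≤ succ^[n] κ := hA ▸ h
  let T : Fin n → Set A := fun i => cardSeg (succ^[i + 1] κ)
  obtain ⟨c, hc⟩ := exists_reaching_map (D := D) (K := A) hκ (strictMono_iterate_succ κ) n (T ·)
    (fun i => (mk_cardSeg (hθA _ i.2)).ge)
    (fun i x => (mk_Iio_subtype_le _ x).trans (mk_Iio_le_of_mem_cardSeg_succ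
      (by rw [← iterate_succ_apply' succ]; exact x.2)))
    hD (fun p => p.1.1) (fun p => p.2.2) (fun p => p.1.2)
  refine ⟨fun a v => if hv : ∀ i, v i ∈ T i then c a fun i => ⟨v i, hv i⟩ else a, ?_⟩
  intro S hS hlarge y hy
  obtain ⟨a, ha, b, hb, hab⟩ :=
    hc ⟨(S ∩ B, y), ⟨inter_subset_right, hy⟩, hlarge 0 (Nat.zero_le n)⟩
      (fun i => Subtype.val ⁻¹' S) fun i => (hlarge _ i.2).trans_eq <| by
        rw [← mk_image_eq Subtype.val_injective, Subtype.image_preimage_coe, inter_comm]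
  have := hS a ha.1 (fun i => b i) hb
  dsimp only at this
  rwa [dif_pos fun i => (b i).2, hab] at this

theorem le_mk_inter_cardSeg (hA : #A = succ^[n] κ) (hIio : ∀ x : A, #(Iio x) < #A)
    {g : A → A → A} (hg : ∀ x, BijOn (g x) (Iio x) (cardSeg #(Iio x)))
    {S : Set A} (hS : ∀ x ∈ S, MapsTo (g x) S S) (hScard : #S = #A) {j : ℕ} (hj : j ≤ n) :
    succ^[j] κ ≤ #(S ∩ cardSeg (succ^[j] κ) : Set A) := by
  induction hj using Nat.decreasingInduction with
  | self => rw [← hA, cardSeg_mk_eq_univ hIio, inter_univ, hScard]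
  | of_succ j hj ih =>
    obtain ⟨x, ⟨hxS, hx⟩, hjx⟩ :=
      exists_le_mk_inter_Iio ((strictMono_iterate_succ κ (Nat.lt_succ_self j)).trans_le ih)
    have hxj : #(Iio x) ≤ succ^[j] κ :=
      mk_Iio_le_of_mem_cardSeg_succ (by rw [← iterate_succ_apply' succ]; exact hx)
    calc succ^[j] κ ≤ #(S ∩ cardSeg (succ^[j + 1] κ) ∩ Iio x : Set A) := hjx
      _ ≤ #(S ∩ Iio x : Set A) := mk_le_mk_of_subset (inter_subset_inter_left _ inter_subset_left)
      _ ≤ #(S ∩ cardSeg #(Iio x) : Set A) :=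
        mk_inter_le_of_injOn (hS x hxS) (hg x).mapsTo (hg x).injOn
      _ ≤ #(S ∩ cardSeg (succ^[j] κ) : Set A) :=
        mk_le_mk_of_subset (inter_subset_inter_right _ (cardSeg_mono hxj))

theorem cardSeg_subset (hκ : ℵ₀ ≤ κ) (hA : #A = succ^[n] κ) {g : A → A → A}
    (hg : ∀ x, SurjOn (g x) (cardSeg #(Iio x)) (Iio x)) {S : Set A}
    (hS : ∀ x ∈ S, MapsTo (g x) S S)
    (hlarge : ∀ j ≤ n, succ^[j] κ ≤ #(S ∩ cardSeg (succ^[j] κ) : Set A)) (h0 : cardSeg κ ⊆ S)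
    {j : ℕ} (hj : j ≤ n) : cardSeg (succ^[j] κ) ⊆ S := by
  induction j with
  | zero => exact h0
  | succ j ih =>
    intro y hy
    have hsucc : succ^[j + 1] κ = succ (succ^[j] κ) := iterate_succ_apply' _ _ _
    have hL := hlarge (j + 1) hj
    have hlt : succ^[j] κ < #(S ∩ cardSeg (succ^[j + 1] κ) : Set A) :=
      (hsucc ▸ lt_succ _).trans_le hL
    obtain ⟨x, ⟨hxS, hx⟩, hyx, hxj⟩ := exists_lt_mem_diff
      ((hκ.trans ((strictMono_iterate_succ κ).monotone (Nat.zero_le _))).trans hL)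
      ((mk_Iio_le_of_mem_cardSeg_succ (hsucc ▸ hy)).trans_lt hlt)
      ((mk_cardSeg (hA ▸ (strictMono_iterate_succ κ).monotone (by omega))).trans_lt hlt)
    -- `x` has exactly `succ^[j] κ` predecessors, so `g x` maps the segment `ih` puts in `S`
    -- onto `Iio x`.
    have hxj' : #(Iio x) = succ^[j] κ :=
      le_antisymm (mk_Iio_le_of_mem_cardSeg_succ (hsucc ▸ hx)) (not_lt.mp hxj)
    exact ((hg x).mono (hxj' ▸ ih (by omega)) subset_rfl |>.trans (hS x hxS).image_subset) hyx

def ClosedUnder (ops : ℕ → Σ k : ℕ, (Fin k → A) → A) (S : Set A) : Prop :=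
  ∀ m v, (∀ i, v i ∈ S) → (ops m).2 v ∈ S

theorem exists_ops_closedUnder_eq_univ (hκ : ℵ₀ ≤ κ) (hA : #A = succ^[n] κ)
    (hIio : ∀ x : A, #(Iio x) < #A) (h : 2 ^ κ ≤ #A) :
    ∃ ops : ℕ → Σ k : ℕ, (Fin k → A) → A,
      ∀ S : Set A, ClosedUnder ops S → #S = #A → S = Set.univ := by
  choose g hg using fun x : A => exists_bijOn_of_mk_eq (mk_cardSeg (mk_set_le (Iio x)))
  choose g' hg' using fun x : A => exists_bijOn_of_mk_eq (mk_cardSeg (mk_set_le (Iio x))).symm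
  obtain ⟨op, hop⟩ := exists_op_cardSeg_subset hκ hA h
  refine ⟨fun
    | 0 => ⟨2, fun v => g (v 0) (v 1)⟩
    | 1 => ⟨2, fun v => g' (v 0) (v 1)⟩
    | _ + 2 => ⟨n + 1, fun v => op (v 0) (Fin.tail v)⟩, fun S hS hScard => ?_⟩
  have hgS : ∀ x ∈ S, MapsTo (g x) S S := fun x hx y hy =>
    hS 0 ![x, y] (Fin.forall_fin_two.mpr ⟨hx, hy⟩)
  have hg'S : ∀ x ∈ S, MapsTo (g' x) S S := fun x hx y hy =>
    hS 1 ![x, y] (Fin.forall_fin_two.mpr ⟨hx, hy⟩)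
  have hopS : ∀ a ∈ S, ∀ v, (∀ i, v i ∈ S) → op a v ∈ S := fun a ha v hv =>
    hS 2 (Fin.cons a v) (Fin.cases ha hv)
  have hlarge := fun j (hj : j ≤ n) => le_mk_inter_cardSeg hA hIio hg' hg'S hScard hj
  have hsub := cardSeg_subset hκ hA (fun x => (hg x).surjOn) hgS hlarge (hop S hopS hlarge) le_rfl
  rwa [← hA, cardSeg_mk_eq_univ hIio, univ_subset_iff] at hsub

end Algebra

end Jonsson

theorem Cardinal.aleph_add_natCast (α : Ordinal) (n : ℕ) :
    ℵ_ (α + n) = Order.succ^[n] (ℵ_ α) := by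
  induction n with
  | zero => simp
  | succ n ih => rw [Function.iterate_succ_apply', ← ih, Nat.cast_succ, ← add_assoc, ← succ_aleph]

/-- Shelah: if `2^{ℵ_α} ≤ ℵ_{α+n}`, then there is a Jónsson algebra on `ℵ_{α+n}`:
an algebra with countably many finitary operations on a set of cardinality
`ℵ_{α+n}` having no proper subalgebra of the same cardinality. -/
theorem stmt_11 (α : Ordinal) (n : ℕ)
    (h : 2 ^ Cardinal.aleph α ≤ Cardinal.aleph (α + n)) :
    ∃ (A : Type) (ops : ℕ → Σ k : ℕ, (Fin k → A) → A),
      #A = Cardinal.aleph (α + n) ∧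
      ∀ S : Set A,
        (∀ m, ∀ v : Fin (ops m).1 → A, (∀ i, v i ∈ S) → (ops m).2 v ∈ S) →
        #S = Cardinal.aleph (α + n) → S = Set.univ := by
  have hA : #(ℵ_ (α + n)).ord.ToType = ℵ_ (α + n) := mk_ord_toType _
  obtain ⟨ops, hops⟩ := Jonsson.exists_ops_closedUnder_eq_univ (aleph0_le_aleph α)
    (hA.trans (aleph_add_natCast α n)) (fun x => mk_Iio_lt x (by rw [hA, Ordinal.type_toType]))
    (h.trans_eq hA.symm)
  exact ⟨_, ops, hA, fun S hS hScard => hops S hS (hScard.trans hA.symm)⟩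
end

section
/- If λ is a caliber of the topological space X and cf(λ) > ℵ₀, then λ is a caliber of X^I for any index set I. -/
/-!
Every open set of `X^I` contains a basic open set `∏_{j ∈ s i} V i j` with `s i ⊆ I` finite.
The heart of the matter is combinatorial: `λ` finite sets `s i` contain `λ` of them admitting
a colouring `c : I → Fin n` injective on each. Since `cf λ > ℵ₀`, `λ` of the sets have a common
size `n`; then induct on `n`. If some point lies in `λ` of the sets, remove it and give it a new
colour. Otherwise every point lies in fewer than `λ` sets: for regular `λ` a maximal pairwise
disjoint subfamily already has size `λ`, and for singular `λ` one builds `cf λ` blocks of regular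
sizes cofinal in `λ` whose unions are pairwise disjoint, and colours each block separately.
Pulling the basic open sets back along `y ↦ y ∘ c` gives nonempty open subsets of `X^n`, which
has caliber `λ` as a finite power of `X`.
-/

open Cardinal

/-- `λ` is a caliber of the topological space `X`: every family of `λ` nonempty open
sets has a subfamily of cardinality `λ` with nonempty intersection. -/
def Caliber (lam : Cardinal) (X : Type) [TopologicalSpace X] : Prop :=
  ∀ (ι : Type) (U : ι → Set X), #ι = lam →
    (∀ i, IsOpen (U i) ∧ (U i).Nonempty) →
    ∃ J : Set ι, #J = lam ∧ (⋂ i ∈ J, U i).Nonempty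

open Set Order Function

universe u

theorem Cardinal.sum_lt_of_lt_cof_ord {ι : Type u} {f : ι → Cardinal.{u}} {c : Cardinal.{u}}
    (hc : ℵ₀ ≤ c) (hι : #ι < c.ord.cof) (hf : ∀ i, f i < c) : sum f < c :=
  (sum_le_mk_mul_iSup f).trans_lt <|
    mul_lt_of_lt hc (hι.trans_le (Ordinal.cof_ord_le c)) (iSup_lt_of_lt_cof_ord hι hf)

theorem Cardinal.exists_cofinal_family (c : Cardinal) :
    ∃ g : c.ord.cof.ord.ToType → Cardinal, (∀ k, g k < c) ∧ ∀ μ < c, ∃ k, μ ≤ g k := by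
  obtain ⟨f, hf⟩ := Ordinal.exists_isFundamentalSeq (o := c.ord) rfl
  refine ⟨fun k => (f (Ordinal.ToType.mk.symm k)).1.card, fun k => lt_ord.1 (f _).2,
    fun μ hμ => ?_⟩
  obtain ⟨_, ⟨i, rfl⟩, hi⟩ := hf.isCofinal_range ⟨μ.ord, ord_lt_ord.2 hμ⟩
  exact ⟨Ordinal.ToType.mk i, by simpa using ord_le.1 hi⟩

theorem exists_add_sum_Iio_le {K : Type u} [LinearOrder K] [WellFoundedLT K] {c : Cardinal.{u}}
    (hc : ℵ₀ ≤ c) (hK : ∀ k : K, #(Iio k) < c.ord.cof) {b : K → Cardinal} (hb : ∀ k, b k < c)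
    {F : Cardinal → Cardinal} (hF : ∀ μ < c, F μ < c) :
    ∃ ρ : K → Cardinal, ∀ k, ρ k < c ∧ b k + sum (fun k' : Iio k => F (ρ k')) ≤ ρ k := by
  let ρ : K → Cardinal := WellFoundedLT.fix fun k ρ => b k + sum fun k' : Iio k => F (ρ k' k'.2)
  have hρ (k : K) : ρ k = b k + sum fun k' : Iio k => F (ρ k') := WellFoundedLT.fix_eq _ k
  refine ⟨ρ, fun k => ⟨?_, (hρ k).ge⟩⟩
  induction k using WellFoundedLT.induction with
  | _ k ih =>
    rw [hρ]
    exact add_lt_of_lt hc (hb k) (sum_lt_of_lt_cof_ord hc (hK k) fun k' => hF _ (ih k' k'.2))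

theorem Cardinal.mk_sdiff_eq_succ {α : Type u} {G T : Set α} {ρ : Cardinal.{u}} (hρ : ℵ₀ ≤ ρ)
    (hG : #G = succ ρ) (hT : #T ≤ ρ) : #(G \ T : Set α) = succ ρ := by
  refine le_antisymm (hG ▸ mk_le_mk_of_subset sdiff_subset) (succ_le_of_lt ?_)
  by_contra! hle
  have := (hG.symm.le.trans (le_mk_sdiff_add_mk G T)).trans (add_le_add hle hT)
  exact (add_eq_self hρ ▸ this).not_gt (lt_succ ρ)

namespace FinsetFamily

variable {A I : Type}

def degree (s : A → Finset I) (S : Set A) (j : I) : Cardinal := #{a ∈ S | j ∈ s a}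

/-- Colours are natural numbers below `n` rather than elements of `Fin n`, so that points lying in
no member of `J` need no colour (there is no map `I → Fin 0` when `I` is nonempty). -/
def RainbowColorable (n : ℕ) (s : A → Finset I) (J : Set A) : Prop :=
  ∃ c : I → ℕ, ∀ a ∈ J, InjOn c (s a) ∧ ∀ j ∈ s a, c j < n

variable (A I) in
def HasRainbowSubfamilies (lam : Cardinal) (n : ℕ) : Prop :=
  ∀ (s : A → Finset I) (S : Set A), #S = lam → (∀ a ∈ S, (s a).card ≤ n) →
    ∃ J ⊆ S, #J = lam ∧ RainbowColorable n s J

theorem degree_le_mk (s : A → Finset I) (S : Set A) (j : I) : degree s S j ≤ #S :=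
  mk_le_mk_of_subset (sep_subset _ _)

theorem rainbowColorable_singleton {n : ℕ} {s : A → Finset I} {a : A} (h : (s a).card ≤ n) :
    RainbowColorable n s {a} := by
  classical
  refine ⟨fun j => (s a).toList.idxOf j, forall_eq.2 ?_⟩
  refine ⟨fun j hj k _ hjk => (List.idxOf_inj (Finset.mem_toList.2 hj)).1 hjk, fun j hj => ?_⟩
  calc (s a).toList.idxOf j < (s a).toList.length :=
        List.idxOf_lt_length_iff.2 (Finset.mem_toList.2 hj)
    _ = (s a).card := Finset.length_toList _
    _ ≤ n := h

theorem RainbowColorable.iUnion {n : ℕ} {s : A → Finset I} {K : Type} {J : K → Set A}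
    (hdisj : Pairwise (Disjoint on fun k => ⋃ a ∈ J k, (s a : Set I)))
    (h : ∀ k, RainbowColorable n s (J k)) : RainbowColorable n s (⋃ k, J k) := by
  classical
  choose c hc using h
  let c' : I → ℕ := fun j => if hj : ∃ k, j ∈ ⋃ a ∈ J k, (s a : Set I) then c hj.choose j else 0
  have hc' (k : K) (a : A) (ha : a ∈ J k) : EqOn c' (c k) (s a) := by
    intro j hj
    have hex : ∃ k, j ∈ ⋃ a ∈ J k, (s a : Set I) := ⟨k, mem_biUnion ha hj⟩
    simp only [c', dif_pos hex]
    congr 1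
    by_contra hne
    exact disjoint_left.1 (hdisj hne) hex.choose_spec (mem_biUnion ha hj)
  refine ⟨c', fun a ha => ?_⟩
  obtain ⟨k, hak⟩ := mem_iUnion.1 ha
  exact ⟨(hc k a hak).1.congr (hc' k a hak).symm,
    fun j hj => hc' k a hak hj ▸ (hc k a hak).2 j hj⟩

theorem _root_.Set.PairwiseDisjoint.rainbowColorable {n : ℕ} {s : A → Finset I} {M : Set A}
    (hM : M.PairwiseDisjoint fun a => (s a : Set I)) (hs : ∀ a ∈ M, (s a).card ≤ n) :
    RainbowColorable n s M := by
  have hdisj : Pairwise (Disjoint on fun a : M => ⋃ b ∈ ({a.1} : Set A), (s b : Set I)) :=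
    fun a b hab => by simpa using hM a.2 b.2 (Subtype.coe_ne_coe.2 hab)
  simpa using RainbowColorable.iUnion hdisj fun a => rainbowColorable_singleton (hs a a.2)

theorem RainbowColorable.of_erase [DecidableEq I] {n : ℕ} {s : A → Finset I} {J : Set A} {j₀ : I}
    (h : RainbowColorable n (fun a => (s a).erase j₀) J) : RainbowColorable (n + 1) s J := by
  obtain ⟨c, hc⟩ := h
  refine ⟨update c j₀ n, fun a ha => ⟨?_, fun j hj => ?_⟩⟩
  · have hsub : (s a : Set I) ⊆ insert j₀ ((s a).erase j₀ : Set I) := by simp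
    refine InjOn.mono hsub ((injOn_insert (by simp)).2 ⟨?_, ?_⟩)
    · exact (hc a ha).1.congr fun j hj =>
        (update_of_ne (Finset.ne_of_mem_erase hj) _ _).symm
    · rintro ⟨j, hj, hcj⟩
      rw [update_self, update_of_ne (Finset.ne_of_mem_erase hj)] at hcj
      exact (hc a ha).2 j hj |>.ne hcj
  · rcases eq_or_ne j j₀ with rfl | hne
    · simp
    · rw [update_of_ne hne]
      exact ((hc a ha).2 j (Finset.mem_erase.2 ⟨hne, hj⟩)).trans (Nat.lt_succ_self n)

theorem hasRainbowSubfamilies_zero (lam : Cardinal) : HasRainbowSubfamilies A I lam 0 := by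
  intro s S hS hs
  refine ⟨S, subset_rfl, hS, fun _ => 0, fun a ha => ?_⟩
  simp [Finset.card_eq_zero.1 (Nat.le_zero.1 (hs a ha))]

theorem HasRainbowSubfamilies.succ {lam : Cardinal} {n : ℕ}
    (ih : HasRainbowSubfamilies A I lam n)
    (hlow : ∀ (s : A → Finset I) (S : Set A), #S = lam → (∀ a ∈ S, (s a).card ≤ n + 1) →
      (∀ j, degree s S j < lam) → ∃ J ⊆ S, #J = lam ∧ RainbowColorable (n + 1) s J) :
    HasRainbowSubfamilies A I lam (n + 1) := by
  classical
  intro s S hS hs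
  by_cases heavy : ∃ j, degree s S j = lam
  · obtain ⟨j, hj⟩ := heavy
    obtain ⟨J, hJS, hJ, hc⟩ := ih (fun a => (s a).erase j) {a ∈ S | j ∈ s a} hj fun a ha => by
      rw [Finset.card_erase_of_mem ha.2]
      have := hs a ha.1
      omega
    exact ⟨J, hJS.trans (sep_subset _ _), hJ, hc.of_erase⟩
  · exact hlow s S hS hs fun j => (hS ▸ degree_le_mk s S j).lt_of_ne fun h => heavy ⟨j, h⟩

theorem exists_pairwiseDisjoint_of_isRegular {ν : Cardinal} (hν : ν.IsRegular)
    {s : A → Finset I} {S : Set A} (hS : #S = ν) (hdeg : ∀ j, degree s S j < ν) :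
    ∃ M ⊆ S, #M = ν ∧ M.PairwiseDisjoint fun a => (s a : Set I) := by
  obtain ⟨M, ⟨hMS, hM⟩, hmax⟩ := zorn_subset
    {M | M ⊆ S ∧ M.PairwiseDisjoint fun a => (s a : Set I)} fun C hC hchain =>
      ⟨⋃₀ C, ⟨sUnion_subset fun M hM => (hC hM).1,
        (pairwise_sUnion hchain.directedOn).2 fun M hM => (hC hM).2⟩,
        fun _ => subset_sUnion_of_mem⟩
  refine ⟨M, hMS, le_antisymm (hS ▸ mk_le_mk_of_subset hMS) ?_, hM⟩
  by_contra! hlt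
  -- by maximality, every member of `S` meets a member of `M`
  have hcover : S ⊆ M ∪ ⋃ j ∈ ⋃ a ∈ M, (s a : Set I), {b ∈ S | j ∈ s b} := by
    intro a ha
    by_contra h
    rw [mem_union, not_or] at h
    refine h.1 (hmax ⟨insert_subset ha hMS, hM.insert fun b hb _ => ?_⟩ (subset_insert a M)
      (mem_insert a M))
    exact disjoint_left.2 fun j hja hjb => h.2 (mem_biUnion (mem_biUnion hb hjb) ⟨ha, hja⟩)
  have hsupp : #(⋃ a ∈ M, (s a : Set I)) < ν :=
    (card_biUnion_lt_iff_forall_of_isRegular hν hlt).2 fun a _ =>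
      (s a).finite_toSet.lt_aleph0.trans_le hν.aleph0_le
  have hbad : #(⋃ j ∈ ⋃ a ∈ M, (s a : Set I), {b ∈ S | j ∈ s b}) < ν :=
    (card_biUnion_lt_iff_forall_of_isRegular hν hsupp).2 fun j _ => hdeg j
  have := (mk_le_mk_of_subset hcover).trans (mk_union_le _ _)
  exact this.not_gt (hS ▸ add_lt_of_lt hν.aleph0_le hlt hbad)

theorem _root_.Cardinal.IsRegular.hasRainbowSubfamilies {ν : Cardinal} (hν : ν.IsRegular) :
    ∀ n, HasRainbowSubfamilies A I ν n
  | 0 => hasRainbowSubfamilies_zero ν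
  | n + 1 => (hν.hasRainbowSubfamilies n).succ fun _ _ hS hs hdeg => by
    obtain ⟨M, hMS, hM, hdisj⟩ := exists_pairwiseDisjoint_of_isRegular hν hS hdeg
    exact ⟨M, hMS, hM, hdisj.rainbowColorable fun a ha => hs a (hMS ha)⟩

theorem mk_biUnion_finset_le (s : A → Finset I) (G : Set A) :
    #(⋃ a ∈ G, (s a : Set I)) ≤ #G * ℵ₀ :=
  (mk_biUnion_le _ _).trans
    (mul_le_mul' le_rfl (ciSup_le' fun a => (s a.1).finite_toSet.lt_aleph0.le))

theorem mk_sep_meets_biUnion_le {s : A → Finset I} {S G : Set A} {θ : Cardinal} (hθ : ℵ₀ ≤ θ)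
    (hG : ∀ a ∈ G, ∀ j ∈ s a, degree s S j ≤ θ) (hGθ : #G ≤ θ) :
    #{a ∈ S | ∃ j ∈ s a, j ∈ ⋃ b ∈ G, (s b : Set I)} ≤ θ := by
  have hsub : {a ∈ S | ∃ j ∈ s a, j ∈ ⋃ b ∈ G, (s b : Set I)} ⊆
      ⋃ j : ⋃ b ∈ G, (s b : Set I), {a ∈ S | j.1 ∈ s a} :=
    fun a ⟨ha, j, hj, hjG⟩ => mem_iUnion.2 ⟨⟨j, hjG⟩, ha, hj⟩
  have hdeg (j : ⋃ b ∈ G, (s b : Set I)) : degree s S j ≤ θ := by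
    obtain ⟨b, hb, hjb⟩ := mem_iUnion₂.1 j.2
    exact hG b hb j hjb
  calc _ ≤ #(⋃ b ∈ G, (s b : Set I)) * θ :=
        (mk_le_mk_of_subset hsub).trans
          ((mk_iUnion_le _).trans (mul_le_mul' le_rfl (ciSup_le' hdeg)))
    _ ≤ θ * ℵ₀ * θ := mul_le_mul' ((mk_biUnion_finset_le s G).trans (mul_le_mul' hGθ le_rfl)) le_rfl
    _ = θ := by rw [Cardinal.mul_eq_left hθ hθ aleph0_ne_zero, mul_eq_self hθ]

theorem exists_lt_mk_degree_lt {lam : Cardinal} (hlam : lam.IsSingular) {s : A → Finset I}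
    {S : Set A} (hS : #S = lam) (hdeg : ∀ j, degree s S j < lam) {μ : Cardinal} (hμ : μ < lam) :
    ∃ θ < lam, μ < θ ∧ μ < #{a ∈ S | ∀ j ∈ s a, degree s S j < θ} := by
  obtain ⟨g, hg, hg_cof⟩ := lam.exists_cofinal_family
  by_contra! hsmall
  have hθ (k) : max (g k) (succ μ) < lam := max_lt (hg k) (hlam.isSuccLimit.succ_lt hμ)
  -- `S` would be covered by `cf λ < λ` sets of size `≤ μ`
  have hcover : S ⊆ ⋃ k, {a ∈ S | ∀ j ∈ s a, degree s S j < max (g k) (succ μ)} := by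
    intro a ha
    have hsup : (s a).sup (fun j => succ (degree s S j)) < lam :=
      (Finset.sup_lt_iff hlam.pos).2 fun j _ => hlam.isSuccLimit.succ_lt (hdeg j)
    obtain ⟨k, hk⟩ := hg_cof _ hsup
    refine mem_iUnion.2 ⟨k, ha, fun j hj => (lt_succ _).trans_le ?_⟩
    exact (Finset.le_sup (f := fun j => succ (degree s S j)) hj).trans (hk.trans (le_max_left _ _))
  have : lam ≤ lam.ord.cof * μ := calc
    lam = #S := hS.symm
    _ ≤ _ := mk_le_mk_of_subset hcover
    _ ≤ _ := mk_iUnion_le _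
    _ ≤ _ := by
      rw [mk_toType, card_ord]
      exact mul_le_mul' le_rfl (ciSup_le' fun k =>
        hsmall _ (hθ k) ((lt_succ μ).trans_le (le_max_right _ _)))
  exact this.not_gt (mul_lt_of_lt hlam.aleph0_le hlam.cof_ord_lt hμ)

theorem exists_regular_blocks {lam : Cardinal} (hlam : lam.IsSingular) {s : A → Finset I}
    {S : Set A} (hS : #S = lam) (hdeg : ∀ j, degree s S j < lam) :
    ∃ (K : Type) (H : K → Set A), (∀ k, H k ⊆ S ∧ (#(H k)).IsRegular) ∧
      (∀ μ < lam, ∃ k, μ < #(H k)) ∧ Pairwise (Disjoint on fun k => ⋃ a ∈ H k, (s a : Set I)) := by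
  have hℵ : ℵ₀ < lam := hlam.aleph0_le.lt_of_ne fun h => not_isSingular_aleph0 (h ▸ hlam)
  choose! θ hθ hρθ hθS using fun μ (hμ : μ < lam) => exists_lt_mk_degree_lt hlam hS hdeg hμ
  obtain ⟨g, hg, hg_cof⟩ := lam.exists_cofinal_family
  obtain ⟨ρ, hρ⟩ := exists_add_sum_Iio_le hℵ.le (fun k => by simpa using mk_Iio_lt k (by simp))
    (b := fun k => max (g k) ℵ₀) (fun k => max_lt (hg k) hℵ) hθ
  have hgρ (k) : max (g k) ℵ₀ ≤ ρ k := le_self_add.trans (hρ k).2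
  have hρℵ (k) : ℵ₀ ≤ ρ k := (le_max_right _ _).trans (hgρ k)
  -- `G k` has `succ (ρ k)` members, all of whose points have degree `< θ (ρ k)`; at most `ρ k`
  -- of them meet a member of an earlier `G k'`, and discarding those leaves the block `H k`.
  choose G hGS hG using fun k => le_mk_iff_exists_subset.1 (succ_le_of_lt (hθS _ (hρ k).1))
  let B k := {a ∈ S | ∃ j ∈ s a, j ∈ ⋃ b ∈ G k, (s b : Set I)}
  have hB (k) : #(B k) ≤ θ (ρ k) :=
    mk_sep_meets_biUnion_le ((hρℵ k).trans (hρθ _ (hρ k).1).le)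
      (fun a ha j hj => ((hGS k ha).2 j hj).le) ((hG k).trans_le (succ_le_of_lt (hρθ _ (hρ k).1)))
  have hB_lt (k) : #(⋃ k' : Iio k, B k') ≤ ρ k := calc
    _ ≤ sum fun k' : Iio k => #(B k') := mk_iUnion_le_sum_mk
    _ ≤ sum fun k' : Iio k => θ (ρ k') := sum_le_sum _ _ fun k' => hB k'
    _ ≤ ρ k := le_add_self.trans (hρ k).2
  let H k := G k \ ⋃ k' : Iio k, B k'
  have hH (k) : #(H k) = succ (ρ k) := mk_sdiff_eq_succ (hρℵ k) (hG k) (hB_lt k)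
  refine ⟨_, H, fun k => ⟨sdiff_subset.trans ((hGS k).trans (sep_subset _ _)),
    hH k ▸ isRegular_succ (hρℵ k)⟩, fun μ hμ => ?_, (pairwise_disjoint_on _).2 fun k' k hk => ?_⟩
  · obtain ⟨k, hk⟩ := hg_cof μ hμ
    exact ⟨k, hH k ▸ (hk.trans ((le_max_left _ _).trans (hgρ k))).trans_lt (lt_succ _)⟩
  · refine disjoint_left.2 fun j hj' hj => ?_
    obtain ⟨b, hb, hjb⟩ := mem_iUnion₂.1 hj'
    obtain ⟨a, ⟨haG, haB⟩, hja⟩ := mem_iUnion₂.1 hj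
    exact haB (mem_iUnion.2 ⟨⟨k', hk⟩, (hGS k haG).1, j, hja, mem_biUnion hb.1 hjb⟩)

theorem _root_.Cardinal.IsSingular.hasRainbowSubfamilies {lam : Cardinal} (hlam : lam.IsSingular) :
    ∀ n, HasRainbowSubfamilies A I lam n
  | 0 => hasRainbowSubfamilies_zero lam
  | n + 1 => (hlam.hasRainbowSubfamilies n).succ fun s S hS hs hdeg => by
    obtain ⟨K, H, hH, hH_cof, hdisj⟩ := exists_regular_blocks hlam hS hdeg
    choose J hJH hJ hJc using fun k =>
      (hH k).2.hasRainbowSubfamilies (n + 1) s (H k) rfl fun a ha => hs a ((hH k).1 ha)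
    have hJS : ⋃ k, J k ⊆ S := iUnion_subset fun k => (hJH k).trans (hH k).1
    refine ⟨⋃ k, J k, hJS, le_antisymm (hS ▸ mk_le_mk_of_subset hJS) ?_,
      RainbowColorable.iUnion (hdisj.mono fun k k' h => h.mono
        (biUnion_subset_biUnion_left (hJH k)) (biUnion_subset_biUnion_left (hJH k'))) hJc⟩
    refine le_of_forall_lt fun μ hμ => ?_
    obtain ⟨k, hk⟩ := hH_cof μ hμ
    exact hk.trans_le ((hJ k).symm.le.trans (mk_le_mk_of_subset (subset_iUnion J k)))

theorem hasRainbowSubfamilies_of_aleph0_le {lam : Cardinal} (hlam : ℵ₀ ≤ lam) (n : ℕ) :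
    HasRainbowSubfamilies A I lam n :=
  (isRegular_or_isSingular hlam).elim (·.hasRainbowSubfamilies n) (·.hasRainbowSubfamilies n)

theorem exists_rainbow_subfamily {lam : Cardinal} (hlam : ℵ₀ < lam.ord.cof)
    (s : A → Finset I) (hA : #A = lam) :
    ∃ (n : ℕ) (c : I → Fin n) (J : Set A), #J = lam ∧ ∀ a ∈ J, InjOn c (s a) := by
  have hℵ : ℵ₀ ≤ lam := hlam.le.trans (Ordinal.cof_ord_le lam)
  obtain ⟨n, hn⟩ := infinite_pigeonhole (fun a => (s a).card) (hA ▸ hℵ) (by simpa [hA] using hlam)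
  obtain ⟨J, -, hJ, c, hc⟩ :=
    hasRainbowSubfamilies_of_aleph0_le hℵ n s _ (hn.trans hA) fun a ha => ha.le
  refine ⟨n + 1, fun j => Fin.ofNat (n + 1) (c j), J, hJ,
    fun a ha j hj k hk hjk => (hc a ha).1 hj hk ?_⟩
  have hj' := Nat.lt_succ_of_lt ((hc a ha).2 j hj)
  have hk' := Nat.lt_succ_of_lt ((hc a ha).2 k hk)
  simpa [Fin.ext_iff, Nat.mod_eq_of_lt hj', Nat.mod_eq_of_lt hk'] using hjk

end FinsetFamily

theorem exists_nonempty_biInter_of_subtype {lam : Cardinal} {X ι : Type} {U : ι → Set X}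
    {J₀ : Set ι}
    (h : ∃ J : Set J₀, #J = lam ∧ (⋂ i ∈ J, U i).Nonempty) :
    ∃ J : Set ι, #J = lam ∧ (⋂ i ∈ J, U i).Nonempty := by
  obtain ⟨J, hJ, x, hx⟩ := h
  exact ⟨Subtype.val '' J, by rwa [mk_image_eq Subtype.val_injective], x, by simpa using hx⟩

section Caliber

variable {lam : Cardinal} {X Y : Type} [TopologicalSpace X] [TopologicalSpace Y]

theorem Caliber.exists_of_continuous (h : Caliber lam X) {f : X → Y} (hf : Continuous f)
    {ι : Type} (U : ι → Set Y) (hι : #ι = lam) (hU : ∀ i, IsOpen (U i) ∧ (f ⁻¹' U i).Nonempty) :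
    ∃ J : Set ι, #J = lam ∧ (⋂ i ∈ J, U i).Nonempty := by
  obtain ⟨J, hJ, x, hx⟩ := h ι (fun i => f ⁻¹' U i) hι fun i => ⟨(hU i).1.preimage hf, (hU i).2⟩
  exact ⟨J, hJ, f x, by simpa using hx⟩

theorem Caliber.of_surjective (h : Caliber lam X) {f : X → Y} (hf : Continuous f)
    (hsurj : Surjective f) : Caliber lam Y :=
  fun _ U hι hU => h.exists_of_continuous hf U hι fun i => ⟨(hU i).1, (hU i).2.preimage hsurj⟩

theorem caliber_of_subsingleton [Subsingleton X] [Nonempty X] : Caliber lam X := by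
  intro ι U hι hU
  refine ⟨univ, by rwa [mk_univ], Classical.arbitrary X, mem_iInter₂.2 fun i _ => ?_⟩
  obtain ⟨x, hx⟩ := (hU i).2
  rwa [Subsingleton.elim (Classical.arbitrary X) x]

theorem Caliber.prod (hX : Caliber lam X) (hY : Caliber lam Y) : Caliber lam (X × Y) := by
  intro ι U hι hU
  choose p hp using fun i => (hU i).2
  choose u v hu hv hpu hpv huv using fun i => isOpen_prod_iff.1 (hU i).1 (p i).1 (p i).2 (hp i)
  obtain ⟨J₁, hJ₁, x, hx⟩ := hX ι u hι fun i => ⟨hu i, _, hpu i⟩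
  refine exists_nonempty_biInter_of_subtype (J₀ := J₁) ?_
  obtain ⟨J, hJ, y, hy⟩ := hY J₁ (fun i => v i) hJ₁ fun i => ⟨hv i, _, hpv i⟩
  refine ⟨J, hJ, (x, y), mem_iInter₂.2 fun i hi => huv i ⟨?_, mem_iInter₂.1 hy i hi⟩⟩
  exact mem_iInter₂.1 hx i i.2

theorem Caliber.pi_fin (h : Caliber lam X) : ∀ n, Caliber lam (Fin n → X)
  | 0 => caliber_of_subsingleton
  | n + 1 =>
    have hX₁ : Caliber lam (Fin 1 → X) :=
      h.of_surjective (Homeomorph.funUnique (Fin 1) X).symm.continuous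
        (Homeomorph.funUnique (Fin 1) X).symm.surjective
    ((h.pi_fin n).prod hX₁).of_surjective (Fin.appendHomeomorph n 1).continuous
      (Fin.appendHomeomorph n 1).surjective

end Caliber

/-- Shelah: if `λ` is a caliber of `X` and `cf(λ) > ℵ₀`, then `λ` is a caliber of
any power `X^I`. -/
theorem stmt_14 (lam : Cardinal) (X : Type) [TopologicalSpace X]
    (h1 : Caliber lam X) (h2 : ℵ₀ < lam.ord.cof) (I : Type) :
    Caliber lam (I → X) := by
  rcases isEmpty_or_nonempty I with hI | hI
  · exact caliber_of_subsingleton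
  intro ι U hι hU
  choose f hf using fun i => (hU i).2
  choose s V hV hVU using fun i => isOpen_pi_iff.1 (hU i).1 (f i) (hf i)
  obtain ⟨n, c, J, hJ, hc⟩ := FinsetFamily.exists_rainbow_subfamily h2 s hι
  -- `y ↦ y ∘ c` hits every basic open set `(s i).pi (V i)`, since `c` is injective on `s i`
  have hne (i : J) : ((· ∘ c) ⁻¹' (s i : Set I).pi (V i)).Nonempty :=
    ⟨f i ∘ invFunOn c (s i), fun j hj => by
      simpa [(hc i i.2).leftInvOn_invFunOn hj] using (hV i j hj).2⟩
  obtain ⟨J', hJ', y, hy⟩ := (h1.pi_fin n).exists_of_continuous (by fun_prop)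
    (fun i : J => (s i : Set I).pi (V i)) hJ
    fun i => ⟨isOpen_set_pi (s i).finite_toSet fun j hj => (hV i j hj).1, hne i⟩
  exact exists_nonempty_biInter_of_subtype
    ⟨J', hJ', y, mem_iInter₂.2 fun i hi => hVU i (mem_iInter₂.1 hy i hi)⟩
end
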